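/- arXiv:2310.19949 — 5 statements merged into one kernel-verified Lean document; each statement's English description precedes it below -/
import Mathlib

section
/- Let G be a finite graph and suppose a Builder-Blocker general position game on G has reached a position in which the set of selected vertices is S. Let S' be the set of unselected vertices v such that S ∪ {v} is in general position (the playable vertices). If S ∪ S' is a general position set, then no vertex outside S ∪ S' can ever be selected at any later point of the game, every vertex of S' can legally be selected, and the game finishes precisely after all the vertices of S' have been selected; in particular the final set of the game is S ∪ S'. -/
open Finset SimpleGraph

variable {V : Type*}

/-- `S` is in general position in `G`: no shortest path of `G` contains more than
two vertices of `S`. -/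
def IsGPSet (G : SimpleGraph V) (S : Set V) : Prop :=
  ∀ ⦃u v : V⦄ (p : G.Walk u v), p.IsPath → p.length = G.dist u v →
    (S ∩ {x | x ∈ p.support}).ncard ≤ 2

open scoped Classical in
/-- The set of vertices that can legally be played when the set of already selected
vertices is `S`. -/
noncomputable def playable [Fintype V] (G : SimpleGraph V) (S : Finset V) : Finset V :=
  Finset.univ.filter (fun v => v ∉ S ∧ IsGPSet G (↑(insert v S) : Set V))

open scoped Classical in
/-- Value (final set size with optimal play) of the Builder-Blocker general position game
from position `S` with the given player to move (`true` = Builder, the maximiser;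
`false` = Blocker, the minimiser), computed with a fuel parameter. -/
noncomputable def gameValAux [Fintype V] (G : SimpleGraph V) : ℕ → Bool → Finset V → ℕ
  | 0, _, S => S.card
  | fuel + 1, turn, S =>
    if h : (playable G S).Nonempty then
      if turn then (playable G S).sup' h (fun v => gameValAux G fuel (!turn) (insert v S))
      else (playable G S).inf' h (fun v => gameValAux G fuel (!turn) (insert v S))
    else S.card

/-- Value of the Builder-Blocker general position game from position `S`,
with `turn = true` meaning Builder (the maximiser) is to move. Since at most
`Fintype.card V - S.card` further moves are possible, this fuel suffices. -/
noncomputable def gameVal [Fintype V] (G : SimpleGraph V) (turn : Bool) (S : Finset V) : ℕ :=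
  gameValAux G (Fintype.card V - S.card) turn S

/-- The B-game general position number: Builder moves first. -/
noncomputable def gpg [Fintype V] (G : SimpleGraph V) : ℕ := gameVal G true ∅

/-- The B'-game general position number: Blocker moves first. -/
noncomputable def gpg' [Fintype V] (G : SimpleGraph V) : ℕ := gameVal G false ∅

lemma gp_mono {G : SimpleGraph V} {A B : Set V} (hAB : A ⊆ B) (hB : IsGPSet G B) :
    IsGPSet G A := by
  intro u v p hp hl
  refine le_trans (Set.ncard_le_ncard (Set.inter_subset_inter_left _ hAB) ?_) (hB p hp hl)
  exact Set.Finite.subset (List.finite_toSet p.support) Set.inter_subset_right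

open scoped Classical in
lemma mem_playable [Fintype V] {G : SimpleGraph V} {S : Finset V} {v : V} :
    v ∈ playable G S ↔ v ∉ S ∧ IsGPSet G (↑(insert v S) : Set V) := by
  classical
  simp [playable]

open scoped Classical in
/-- If, at some position `S` of a Builder-Blocker general position game, the union of `S`
with the set `S' = playable G S` of currently playable vertices is itself in general
position, then: no vertex outside `S ∪ S'` can ever be selected later; the vertices of
`S'` can all legally be selected; and the game terminates exactly when all of `S'` has
been selected, the final set being `S ∪ S'` (so the game value from `S` for either
player to move is `(S ∪ S').card`). -/
theorem stmt_1 {V : Type*} [Fintype V] (G : SimpleGraph V) (S : Finset V)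
    (hS : IsGPSet G ↑S) (h : IsGPSet G (↑(S ∪ playable G S) : Set V)) :
    (∀ T : Finset V, S ⊆ T → IsGPSet G ↑T → T ⊆ S ∪ playable G S) ∧
    (∀ T : Finset V, S ⊆ T → T ⊆ S ∪ playable G S → IsGPSet G ↑T) ∧
    (∀ T : Finset V, S ⊆ T → IsGPSet G ↑T → (playable G T = ∅ ↔ T = S ∪ playable G S)) ∧
    (∀ turn : Bool, gameVal G turn S = (S ∪ playable G S).card) := by
  classical
  set P := playable G S with hP
  have h1 : ∀ T : Finset V, S ⊆ T → IsGPSet G ↑T → T ⊆ S ∪ P := by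
    intro T hST hT v hv
    by_cases hvS : v ∈ S
    · exact Finset.mem_union_left _ hvS
    · refine Finset.mem_union_right _ (mem_playable.mpr ⟨hvS, gp_mono ?_ hT⟩)
      exact Finset.coe_subset.mpr (Finset.insert_subset hv hST)
  have h2 : ∀ T : Finset V, S ⊆ T → T ⊆ S ∪ P → IsGPSet G ↑T := by
    intro T _ hTP
    exact gp_mono (Finset.coe_subset.mpr hTP) h
  have h3 : ∀ T : Finset V, S ⊆ T → IsGPSet G ↑T → (playable G T = ∅ ↔ T = S ∪ P) := by
    intro T hST hT
    constructor
    · intro he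
      refine Finset.Subset.antisymm (h1 T hST hT) ?_
      intro v hv
      by_contra hvT
      have hmem : v ∈ playable G T := by
        refine mem_playable.mpr ⟨hvT, h2 _ (hST.trans (Finset.subset_insert _ _)) ?_⟩
        exact Finset.insert_subset hv (h1 T hST hT)
      simp [he] at hmem
    · rintro rfl
      ext v
      simp only [Finset.notMem_empty, iff_false]
      intro hvmem
      obtain ⟨hvT, hgp⟩ := mem_playable.mp hvmem
      exact hvT (h1 _ (hST.trans (Finset.subset_insert _ _)) hgp (Finset.mem_insert_self v _))
  refine ⟨h1, h2, h3, ?_⟩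
  have key : ∀ (fuel : ℕ) (T : Finset V) (turn : Bool), S ⊆ T → T ⊆ S ∪ P →
      (S ∪ P).card ≤ T.card + fuel → gameValAux G fuel turn T = (S ∪ P).card := by
    intro fuel
    induction fuel with
    | zero =>
      intro T turn hST hTP hc
      simp only [gameValAux]
      exact le_antisymm (Finset.card_le_card hTP) (by simpa using hc)
    | succ n ih =>
      intro T turn hST hTP hc
      have hstep : ∀ v ∈ playable G T, gameValAux G n (!turn) (insert v T) = (S ∪ P).card := by
        intro v hv
        obtain ⟨hvT, hgp⟩ := mem_playable.mp hv
        have hsub : insert v T ⊆ S ∪ P :=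
          h1 _ (hST.trans (Finset.subset_insert _ _)) hgp
        refine ih _ (!turn) (hST.trans (Finset.subset_insert _ _)) hsub ?_
        rw [Finset.card_insert_of_notMem hvT]
        omega
      by_cases hne : (playable G T).Nonempty
      · simp only [gameValAux, dif_pos hne]
        cases turn with
        | true =>
          simp only [if_true]
          rw [Finset.sup'_congr hne rfl hstep, Finset.sup'_const]
        | false =>
          simp only [if_false, Bool.false_eq_true]
          rw [Finset.inf'_congr hne rfl hstep, Finset.inf'_const]
      · have hempty : playable G T = ∅ := Finset.not_nonempty_iff_eq_empty.mp hne
        have heq := (h3 T hST (h2 T hST hTP)).mp hempty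
        subst heq
        simp only [gameValAux, dif_neg hne]
  intro turn
  refine key _ S turn (Finset.Subset.refl S) Finset.subset_union_left ?_
  rw [Nat.add_sub_cancel' (Finset.card_le_univ S)]
  exact Finset.card_le_univ _
end

section
/- Let 𝒢 be the class of finite connected graphs G such that for all vertices x, y of G with d(x,y) ≥ 2 there exists an edge yz of G with d(x,y) = d(x,z). If G ∈ 𝒢, then gpg'(G) ≤ 2 + max over edges xy of G of |ₓW_y|, where ₓW_y = {w ∈ V(G) : d(x,w) = d(y,w)}. -/
open Finset SimpleGraph

variable {V : Type*}

/-- The set of vertices equidistant from `u` and `v`. -/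
def eqW (G : SimpleGraph V) (u v : V) : Set V := {w | G.dist u w = G.dist v w}

/-! ### Auxiliary lemmas -/

lemma ncard_le_two_of_subset_pair {A : Set V} {a b : V} (h : A ⊆ {a, b}) : A.ncard ≤ 2 := by
  calc A.ncard ≤ ({a, b} : Set V).ncard := Set.ncard_le_ncard h (Set.toFinite _)
    _ ≤ 2 := by
        refine le_trans (Set.ncard_insert_le _ _) ?_
        simp

lemma gp_mono_s4 (G : SimpleGraph V) {S T : Set V} (h : S ⊆ T) (hT : IsGPSet G T) :
    IsGPSet G S := by
  intro u v p hp hl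
  refine le_trans (Set.ncard_le_ncard (Set.inter_subset_inter_left _ h) ?_) (hT p hp hl)
  exact Set.Finite.inter_of_right (p.support.finite_toSet) _

lemma gp_of_subset_pair (G : SimpleGraph V) {S : Set V} {a b : V} (h : S ⊆ {a, b}) :
    IsGPSet G S := by
  intro u v p hp hl
  exact ncard_le_two_of_subset_pair (le_trans (Set.inter_subset_left) h)

/-- On a shortest path, distances to an intermediate vertex add up, and both
segments are shortest. -/
lemma shortest_mid [DecidableEq V] {G : SimpleGraph V} (hG : G.Connected) {u v a : V}
    (p : G.Walk u v) (hl : p.length = G.dist u v) (ha : a ∈ p.support) :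
    (p.takeUntil a ha).length = G.dist u a ∧ (p.dropUntil a ha).length = G.dist a v ∧
      G.dist u a + G.dist a v = G.dist u v := by
  have hsum : (p.takeUntil a ha).length + (p.dropUntil a ha).length = p.length := by
    conv_rhs => rw [← p.take_spec ha]
    rw [SimpleGraph.Walk.length_append]
  have h1 : G.dist u a ≤ (p.takeUntil a ha).length := dist_le _
  have h2 : G.dist a v ≤ (p.dropUntil a ha).length := dist_le _
  have h3 : G.dist u v ≤ G.dist u a + G.dist a v := hG.dist_triangle
  omega

lemma between {G : SimpleGraph V} (hG : G.Connected) {u v α γ : V} (p : G.Walk u v)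
    (hl : p.length = G.dist u v) (hα : α ∈ p.support) (hγ : γ ∈ p.support)
    (hle : G.dist u α ≤ G.dist u γ) : G.dist u γ = G.dist u α + G.dist α γ := by
  classical
  obtain ⟨htake, hdrop, hsum⟩ := shortest_mid hG p hl hα
  have hsplit : γ ∈ (p.takeUntil α hα).support ∨ γ ∈ (p.dropUntil α hα).support := by
    have hsp := p.take_spec hα
    rw [← hsp] at hγ
    exact (SimpleGraph.Walk.mem_support_append_iff _ _).1 hγ
  rcases hsplit with h | h
  · obtain ⟨_, _, hs2⟩ := shortest_mid hG (p.takeUntil α hα) htake h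
    have hz : G.dist γ α = 0 := by omega
    have : γ = α := hG.dist_eq_zero_iff.1 hz
    subst this
    have : G.dist γ γ = 0 := by simp
    omega
  · obtain ⟨_, _, hs2⟩ := shortest_mid hG (p.dropUntil α hα) hdrop h
    obtain ⟨_, _, hs3⟩ := shortest_mid hG p hl hγ
    omega

/-- No shortest path contains all of `x, y, z` when `d(x,y) = d(x,z) ≥ 2` and
`yz` is an edge. -/
lemma triple_not_on_geodesic {G : SimpleGraph V} (hG : G.Connected) {x y z u v : V}
    (hk : 2 ≤ G.dist x y) (hadj : G.Adj y z) (heq : G.dist x y = G.dist x z)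
    (p : G.Walk u v) (hl : p.length = G.dist u v)
    (hx : x ∈ p.support) (hy : y ∈ p.support) (hz : z ∈ p.support) : False := by
  have dyz : G.dist y z = 1 := dist_eq_one_iff_adj.2 hadj
  have cyx : G.dist y x = G.dist x y := dist_comm ..
  have czx : G.dist z x = G.dist x z := dist_comm ..
  have czy : G.dist z y = G.dist y z := dist_comm ..
  rcases le_total (G.dist u x) (G.dist u y) with h1 | h1 <;>
  rcases le_total (G.dist u y) (G.dist u z) with h2 | h2 <;>
  rcases le_total (G.dist u x) (G.dist u z) with h3 | h3 <;>
  [ (have e1 := between hG p hl hx hy h1; have e2 := between hG p hl hy hz h2;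
     have e3 := between hG p hl hx hz h3);
    (have e1 := between hG p hl hx hy h1; have e2 := between hG p hl hy hz h2;
     have e3 := between hG p hl hz hx h3);
    (have e1 := between hG p hl hx hy h1; have e2 := between hG p hl hz hy h2;
     have e3 := between hG p hl hx hz h3);
    (have e1 := between hG p hl hx hy h1; have e2 := between hG p hl hz hy h2;
     have e3 := between hG p hl hz hx h3);
    (have e1 := between hG p hl hy hx h1; have e2 := between hG p hl hy hz h2;
     have e3 := between hG p hl hx hz h3);
    (have e1 := between hG p hl hy hx h1; have e2 := between hG p hl hy hz h2;
     have e3 := between hG p hl hz hx h3);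
    (have e1 := between hG p hl hy hx h1; have e2 := between hG p hl hz hy h2;
     have e3 := between hG p hl hx hz h3);
    (have e1 := between hG p hl hy hx h1; have e2 := between hG p hl hz hy h2;
     have e3 := between hG p hl hz hx h3)] <;>
  omega

lemma three_le_ncard {A : Set V} {a b c : V} (hab : a ≠ b) (hac : a ≠ c) (hbc : b ≠ c)
    (hA : A.Finite) (ha : a ∈ A) (hb : b ∈ A) (hc : c ∈ A) : 3 ≤ A.ncard := by
  have h3 : ({a, b, c} : Set V).ncard = 3 := Set.ncard_eq_three.2 ⟨a, b, c, hab, hac, hbc, rfl⟩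
  have hsub : ({a, b, c} : Set V) ⊆ A := by
    intro w hw
    rcases hw with rfl | rfl | rfl <;> assumption
  calc 3 = ({a, b, c} : Set V).ncard := h3.symm
    _ ≤ A.ncard := Set.ncard_le_ncard hsub hA

lemma lemA_aux {G : SimpleGraph V} (hG : G.Connected) {a b w : V} (hab : G.Adj a b)
    {S : Set V} (hS : IsGPSet G S) (ha : a ∈ S) (hb : b ∈ S) (hw : w ∈ S)
    (hwa : w ≠ a) (hk : G.dist w b = G.dist w a + 1) : False := by
  classical
  obtain ⟨p0, hp0⟩ := (hG w a).exists_walk_length_eq_dist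
  set p := p0.bypass with hpdef
  have hpath : p.IsPath := p0.bypass_isPath
  have hlen : p.length = G.dist w a :=
    le_antisymm (hp0 ▸ p0.length_bypass_le) (dist_le _)
  have hbns : b ∉ p.support := by
    intro hmem
    have h1 : G.dist w b ≤ (p.takeUntil b hmem).length := dist_le _
    have h2 : (p.takeUntil b hmem).length ≤ p.length := SimpleGraph.Walk.length_takeUntil_le _ _
    omega
  set q : G.Walk w b := p.concat hab with hqdef
  have hqsupp : q.support = p.support ++ [b] := by
    rw [hqdef, SimpleGraph.Walk.support_concat]
  have hqpath : q.IsPath := by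
    rw [SimpleGraph.Walk.isPath_def, hqsupp]
    rw [List.nodup_append]
    refine ⟨hpath.support_nodup, by simp, ?_⟩
    intro x hx y hx'
    simp only [List.mem_singleton] at hx'
    subst hx'
    rintro rfl
    exact hbns hx
  have hqlen : q.length = G.dist w b := by
    rw [hqdef, SimpleGraph.Walk.length_concat, hlen, hk]
  have hcard := hS q hqpath hqlen
  have hwq : w ∈ q.support := q.start_mem_support
  have haq : a ∈ q.support := by rw [hqsupp]; simp
  have hbq : b ∈ q.support := q.end_mem_support
  have hwb : w ≠ b := by
    rintro rfl
    rw [show G.dist w w = 0 by simp] at hk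
    omega
  have h3 := three_le_ncard hwa hwb hab.ne
    (Set.Finite.inter_of_right (q.support.finite_toSet) S)
    ⟨hw, hwq⟩ ⟨ha, haq⟩ ⟨hb, hbq⟩
  omega

/-- In a general position set containing both endpoints of an edge, every other
vertex is equidistant from the two endpoints. -/
lemma lemA {G : SimpleGraph V} (hG : G.Connected) {a b w : V} (hab : G.Adj a b)
    {S : Set V} (hS : IsGPSet G S) (ha : a ∈ S) (hb : b ∈ S) (hw : w ∈ S)
    (hwa : w ≠ a) (hwb : w ≠ b) : G.dist a w = G.dist b w := by
  have dab : G.dist a b = 1 := dist_eq_one_iff_adj.2 hab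
  have dba : G.dist b a = 1 := dist_eq_one_iff_adj.2 hab.symm
  have t1 : G.dist w b ≤ G.dist w a + G.dist a b := hG.dist_triangle
  have t2 : G.dist w a ≤ G.dist w b + G.dist b a := hG.dist_triangle
  have c1 : G.dist a w = G.dist w a := dist_comm ..
  have c2 : G.dist b w = G.dist w b := dist_comm ..
  have c3 : G.dist a b = G.dist b a := dist_comm ..
  by_contra hne
  rcases Nat.lt_or_ge (G.dist w a) (G.dist w b) with h | h
  · exact lemA_aux hG hab hS ha hb hw hwa (by omega)
  · exact lemA_aux hG hab.symm hS hb ha hw hwb (by omega)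

lemma gp_triple {G : SimpleGraph V} (hG : G.Connected) {x y z : V}
    (hk : 2 ≤ G.dist x y) (hadj : G.Adj y z) (heq : G.dist x y = G.dist x z) :
    IsGPSet G ({x, y, z} : Set V) := by
  intro u v p hp hl
  by_cases hx : x ∈ p.support
  · by_cases hy' : y ∈ p.support
    · by_cases hz' : z ∈ p.support
      · exact (triple_not_on_geodesic hG hk hadj heq p hl hx hy' hz').elim
      · refine ncard_le_two_of_subset_pair (a := x) (b := y) ?_
        rintro w ⟨(rfl | rfl | rfl), hw2⟩
        · exact Set.mem_insert _ _
        · exact Set.mem_insert_of_mem _ rfl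
        · exact absurd hw2 hz'
    · refine ncard_le_two_of_subset_pair (a := x) (b := z) ?_
      rintro w ⟨(rfl | rfl | rfl), hw2⟩
      · exact Set.mem_insert _ _
      · exact absurd hw2 hy'
      · exact Set.mem_insert_of_mem _ rfl
  · refine ncard_le_two_of_subset_pair (a := y) (b := z) ?_
    rintro w ⟨(rfl | rfl | rfl), hw2⟩
    · exact absurd hw2 hx
    · exact Set.mem_insert _ _
    · exact Set.mem_insert_of_mem _ rfl

lemma card_bound [Fintype V] (G : SimpleGraph V) {a b : V} (S : Finset V)
    (hS : ∀ w ∈ S, w = a ∨ w = b ∨ G.dist a w = G.dist b w) :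
    S.card ≤ 2 + (eqW G a b).ncard := by
  have hsub : (↑S : Set V) ⊆ ({a, b} : Set V) ∪ eqW G a b := by
    intro w hw
    rcases hS w hw with rfl | rfl | h
    · exact Or.inl (Or.inl rfl)
    · exact Or.inl (Or.inr rfl)
    · exact Or.inr h
  calc S.card = (↑S : Set V).ncard := (Set.ncard_coe_finset S).symm
    _ ≤ (({a, b} : Set V) ∪ eqW G a b).ncard := Set.ncard_le_ncard hsub (Set.toFinite _)
    _ ≤ ({a, b} : Set V).ncard + (eqW G a b).ncard := Set.ncard_union_le _ _
    _ ≤ 2 + (eqW G a b).ncard := by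
        have := ncard_le_two_of_subset_pair (le_refl ({a, b} : Set V))
        omega

/-- Once the selected set contains both endpoints of an edge `ab` and all other
selected vertices are equidistant from `a` and `b`, the final size of the game is
at most `2 + |eqW a b|`, no matter how it continues. -/
lemma game_bound [Fintype V] (G : SimpleGraph V) (hG : G.Connected) {a b : V}
    (hab : G.Adj a b) :
    ∀ (fuel : ℕ) (turn : Bool) (S : Finset V), a ∈ S → b ∈ S →
      (∀ w ∈ S, w = a ∨ w = b ∨ G.dist a w = G.dist b w) →
      gameValAux G fuel turn S ≤ 2 + (eqW G a b).ncard := by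
  classical
  intro fuel
  induction fuel with
  | zero =>
    intro turn S ha hb hS
    rw [gameValAux]
    exact card_bound G S hS
  | succ n ih =>
    intro turn S ha hb hS
    rw [gameValAux]
    by_cases h : (playable G S).Nonempty
    · have hstep : ∀ v ∈ playable G S,
          gameValAux G n (!turn) (insert v S) ≤ 2 + (eqW G a b).ncard := by
        intro v hv
        rw [playable, Finset.mem_filter] at hv
        obtain ⟨-, hvS, hgp⟩ := hv
        have hva : v ≠ a := fun h' => hvS (h' ▸ ha)
        have hvb : v ≠ b := fun h' => hvS (h' ▸ hb)
        have hveq : G.dist a v = G.dist b v :=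
          lemA hG hab hgp (by simp [ha]) (by simp [hb]) (by simp) hva hvb
        refine ih (!turn) (insert v S) (Finset.mem_insert_of_mem ha)
          (Finset.mem_insert_of_mem hb) ?_
        intro w hw
        rcases Finset.mem_insert.1 hw with rfl | hw
        · exact Or.inr (Or.inr hveq)
        · exact hS w hw
      rw [dif_pos h]
      rcases turn with _ | _
      · simp only [Bool.false_eq_true, if_false]
        obtain ⟨v, hv⟩ := h
        exact le_trans (Finset.inf'_le _ hv) (hstep v hv)
      · simp only [if_true]
        exact Finset.sup'_le h _ hstep
    · rw [dif_neg h]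
      exact card_bound G S hS

/-- If `G` is a connected graph such that for all `x, y` with `d(x,y) ≥ 2` there is an
edge `yz` with `d(x,y) = d(x,z)`, then `gpg'(G) ≤ 2 + max_{xy ∈ E(G)} |ₓW_y|`. -/
theorem stmt_4 {V : Type*} [Fintype V] (G : SimpleGraph V) (hG : G.Connected)
    (hclass : ∀ x y : V, 2 ≤ G.dist x y → ∃ z : V, G.Adj y z ∧ G.dist x y = G.dist x z) :
    gpg' G ≤ 2 + sSup {n | ∃ x y : V, G.Adj x y ∧ n = (eqW G x y).ncard} := by
  classical
  set M := sSup {n | ∃ x y : V, G.Adj x y ∧ n = (eqW G x y).ncard} with hMdef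
  have hM : ∀ a b : V, G.Adj a b → (eqW G a b).ncard ≤ M := by
    intro a b h
    apply le_csSup
    · refine ⟨Fintype.card V, ?_⟩
      rintro n ⟨x, y, hxy, rfl⟩
      calc (eqW G x y).ncard ≤ (Set.univ : Set V).ncard :=
            Set.ncard_le_ncard (Set.subset_univ _) Set.finite_univ
        _ = Fintype.card V := by rw [Set.ncard_univ, Nat.card_eq_fintype_card]
    · exact ⟨a, b, h, rfl⟩
  rw [gpg', gameVal, Finset.card_empty, Nat.sub_zero]
  rcases Nat.eq_zero_or_pos (Fintype.card V) with h0 | hpos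
  · rw [h0, gameValAux]; simp
  · obtain ⟨n, hn⟩ : ∃ n, Fintype.card V = n + 1 := ⟨_, (Nat.succ_pred_eq_of_pos hpos).symm⟩
    have hne0 : Nonempty V := Fintype.card_pos_iff.mp hpos
    obtain ⟨x₀⟩ := hne0
    have hx₀ : x₀ ∈ playable G ∅ := by
      rw [playable, Finset.mem_filter]
      refine ⟨Finset.mem_univ _, Finset.notMem_empty _,
        gp_of_subset_pair G (a := x₀) (b := x₀) ?_⟩
      intro w hw
      simp only [Finset.coe_insert, Finset.coe_empty] at hw
      simp at hw
      simp [hw]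
    have hne : (playable G ∅).Nonempty := ⟨x₀, hx₀⟩
    rw [hn, gameValAux, dif_pos hne]
    simp only [Bool.false_eq_true, if_false]
    refine le_trans (Finset.inf'_le _ hx₀) ?_
    rcases n with _ | m
    · rw [gameValAux]
      have : (insert x₀ (∅ : Finset V)).card = 1 := by simp
      omega
    · rw [gameValAux]
      by_cases h1 : (playable G (insert x₀ ∅)).Nonempty
      · rw [dif_pos h1]
        simp only [Bool.not_false, if_true]
        apply Finset.sup'_le
        intro y hy
        rw [playable, Finset.mem_filter] at hy
        obtain ⟨-, hyS, hgp2⟩ := hy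
        have hyx : y ≠ x₀ := by
          intro h'
          exact hyS (h' ▸ Finset.mem_insert_self _ _)
        by_cases hadj : G.Adj x₀ y
        · refine le_trans (game_bound G hG hadj m _ _ ?_ ?_ ?_) (by have := hM x₀ y hadj; omega)
          · exact Finset.mem_insert_of_mem (Finset.mem_insert_self _ _)
          · exact Finset.mem_insert_self _ _
          · intro w hw
            rcases Finset.mem_insert.1 hw with h' | hw
            · exact Or.inr (Or.inl h')
            · rcases Finset.mem_insert.1 hw with h' | hw
              · exact Or.inl h'
              · exact absurd hw (Finset.notMem_empty _)
        · have hd2 : 2 ≤ G.dist x₀ y := by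
            have h0' : G.dist x₀ y ≠ 0 := fun h => hyx (hG.dist_eq_zero_iff.1 h).symm
            have h1' : G.dist x₀ y ≠ 1 := fun h => hadj (dist_eq_one_iff_adj.1 h)
            omega
          obtain ⟨z, hyz, hdz⟩ := hclass x₀ y hd2
          have hcard2 : (insert y (insert x₀ (∅ : Finset V))).card = 2 := by
            rw [Finset.card_insert_of_notMem hyS,
              Finset.card_insert_of_notMem (Finset.notMem_empty _), Finset.card_empty]
          rcases m with _ | k
          · rw [gameValAux, hcard2]; omega
          · rw [gameValAux]
            by_cases h2 : (playable G (insert y (insert x₀ ∅))).Nonempty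
            · rw [dif_pos h2]
              simp only [Bool.not_true, Bool.false_eq_true, if_false]
              have hzx : z ≠ x₀ := by
                intro h'
                rw [h', show G.dist x₀ x₀ = 0 by simp] at hdz
                omega
              have hzmem : z ∈ playable G (insert y (insert x₀ ∅)) := by
                rw [playable, Finset.mem_filter]
                refine ⟨Finset.mem_univ _, ?_, ?_⟩
                · simp [hyz.ne', hzx]
                · refine gp_mono_s4 G ?_ (gp_triple hG hd2 hyz hdz)
                  intro w hw
                  simp at hw ⊢
                  tauto
              refine le_trans (Finset.inf'_le _ hzmem) ?_
              refine le_trans (game_bound G hG hyz k _ _ ?_ ?_ ?_) (by have := hM y z hyz; omega)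
              · exact Finset.mem_insert_of_mem (Finset.mem_insert_self _ _)
              · exact Finset.mem_insert_self _ _
              · intro w hw
                rcases Finset.mem_insert.1 hw with h' | hw
                · exact Or.inr (Or.inl h')
                · rcases Finset.mem_insert.1 hw with h' | hw
                  · exact Or.inl h'
                  · rcases Finset.mem_insert.1 hw with h' | hw
                    · refine Or.inr (Or.inr ?_)
                      rw [h', SimpleGraph.dist_comm, SimpleGraph.dist_comm (u := z)]
                      omega
                    · exact absurd hw (Finset.notMem_empty _)
            · rw [dif_neg h2, hcard2]; omega
      · rw [dif_neg h1]
        have : (insert x₀ (∅ : Finset V)).card = 1 := by simp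
        omega
end

section
/- If t ≥ 2 and r₁ ≥ r₂ ≥ … ≥ r_t ≥ 2, then the complete multipartite graph K_{r₁,…,r_t} satisfies gpg(K_{r₁,…,r_t}) = min{r₁, t} and gpg'(K_{r₁,…,r_t}) = max{r_t, t}. -/
open Finset SimpleGraph

variable {V : Type*}

lemma sup'_eq_const {α β : Type*} [LinearOrder β] {s : Finset α} (h : s.Nonempty) {f : α → β}
    {c : β} (hf : ∀ a ∈ s, f a = c) : s.sup' h f = c :=
  le_antisymm (Finset.sup'_le _ _ fun a ha => (hf a ha).le)
    (h.elim fun a ha => (hf a ha).ge.trans (Finset.le_sup' _ ha))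

lemma inf'_eq_const {α β : Type*} [LinearOrder β] {s : Finset α} (h : s.Nonempty) {f : α → β}
    {c : β} (hf : ∀ a ∈ s, f a = c) : s.inf' h f = c :=
  le_antisymm (h.elim fun a ha => (Finset.inf'_le _ ha).trans (hf a ha).le)
    (Finset.le_inf' _ _ fun a ha => (hf a ha).ge)

section CM

variable {t : ℕ} {r : Fin t → ℕ}

/-- Use the same (classical) decidable equality as in the definitions above. -/
private noncomputable abbrev cdec : DecidableEq ((j : Fin t) × Fin (r j)) :=
  fun a b => Classical.propDecidable (a = b)

attribute [local instance 2000] cdec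

/-- local abbreviation for the complete multipartite graph under study -/
local notation "G" => completeMultipartiteGraph (fun i : Fin t => Fin (r i))

/-- The part of the multipartite graph with index `i`, as a finset of vertices. -/
noncomputable def partFinset (r : Fin t → ℕ) (i : Fin t) : Finset (Σ j : Fin t, Fin (r j)) :=
  (univ : Finset (Fin (r i))).map ⟨Sigma.mk i, sigma_mk_injective⟩

lemma mem_partFinset {i : Fin t} {v : Σ j : Fin t, Fin (r j)} :
    v ∈ partFinset r i ↔ v.1 = i := by
  rcases v with ⟨j, a⟩
  simp only [partFinset, mem_map, mem_univ, true_and, Function.Embedding.coeFn_mk]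
  constructor
  · rintro ⟨b, h⟩; exact (congrArg Sigma.fst h).symm
  · rintro rfl; exact ⟨a, rfl⟩

lemma card_partFinset (i : Fin t) : (partFinset r i).card = r i := by
  simp [partFinset]

lemma cmg_adj {u v : Σ j : Fin t, Fin (r j)} : (G).Adj u v ↔ u.1 ≠ v.1 := Iff.rfl

lemma exists_other (ht : 2 ≤ t) (i : Fin t) : ∃ j : Fin t, j ≠ i :=
  Fintype.exists_ne_of_one_lt_card (by simp; omega) i

lemma cmg_walk_same (ht : 2 ≤ t) (hr : ∀ i, 2 ≤ r i)
    {u v : Σ j : Fin t, Fin (r j)} (h1 : u.1 = v.1) :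
    ∃ w : Σ j : Fin t, Fin (r j), (G).Adj u w ∧ (G).Adj w v := by
  obtain ⟨j, hj⟩ := exists_other ht u.1
  refine ⟨⟨j, ⟨0, by have := hr j; omega⟩⟩, fun h => hj ?_, fun h => hj ?_⟩
  · exact (show u.1 = j from h).symm
  · exact (show j = v.1 from h).trans h1.symm

lemma cmg_dist_le_two (ht : 2 ≤ t) (hr : ∀ i, 2 ≤ r i)
    (u v : Σ j : Fin t, Fin (r j)) : (G).dist u v ≤ 2 := by
  by_cases huv : u = v
  · subst huv; simp [SimpleGraph.dist_self]
  by_cases h1 : u.1 = v.1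
  · obtain ⟨w, hw1, hw2⟩ := cmg_walk_same ht hr h1
    have := SimpleGraph.dist_le (Walk.cons hw1 (Walk.cons hw2 Walk.nil))
    simpa using this
  · have := SimpleGraph.dist_le (Walk.cons (show (G).Adj u v from h1) Walk.nil)
    exact this.trans (by simp)

lemma cmg_dist_same (ht : 2 ≤ t) (hr : ∀ i, 2 ≤ r i)
    {u v : Σ j : Fin t, Fin (r j)} (h1 : u.1 = v.1) (h2 : u ≠ v) : (G).dist u v = 2 := by
  have hle := cmg_dist_le_two ht hr u v
  have hne1 : (G).dist u v ≠ 1 :=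
    fun h => (SimpleGraph.dist_eq_one_iff_adj.mp h) h1
  have hne0 : (G).dist u v ≠ 0 := by
    intro h
    rcases SimpleGraph.dist_eq_zero_iff_eq_or_not_reachable.mp h with h' | h'
    · exact h2 h'
    · obtain ⟨w, hw1, hw2⟩ := cmg_walk_same ht hr h1
      exact h' ⟨Walk.cons hw1 (Walk.cons hw2 Walk.nil)⟩
  omega

lemma isGP_iff (ht : 2 ≤ t) (hr : ∀ i, 2 ≤ r i) (A : Set (Σ j : Fin t, Fin (r j))) :
    IsGPSet (G) A ↔
      (∀ u ∈ A, ∀ v ∈ A, u.1 = v.1) ∨ (∀ u ∈ A, ∀ v ∈ A, u ≠ v → u.1 ≠ v.1) := by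
  constructor
  · intro hGP
    by_contra hcon
    push_neg at hcon
    obtain ⟨⟨a, haA, b, hbA, hab⟩, c, hcA, d, hdA, hcd, hcd1⟩ := hcon
    have he : ∃ e, e ∈ A ∧ e.1 ≠ c.1 := by
      by_cases hac : a.1 = c.1
      · exact ⟨b, hbA, fun h => hab (hac.trans h.symm)⟩
      · exact ⟨a, haA, hac⟩
    obtain ⟨e, heA, hec⟩ := he
    have hed : e.1 ≠ d.1 := fun h => hec (h.trans hcd1.symm)
    have hce : c ≠ e := fun h => hec (by rw [h])
    have hde : d ≠ e := fun h => hed (by rw [h])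
    set p : (G).Walk c d :=
      Walk.cons (show (G).Adj c e from fun h => hec h.symm)
        (Walk.cons (show (G).Adj e d from hed) Walk.nil) with hp
    have hpath : p.IsPath := by
      rw [hp]
      simp [Walk.isPath_def, hcd, hce, hde.symm]
    have hlen : p.length = (G).dist c d := by
      rw [hp, cmg_dist_same ht hr hcd1 hcd]; simp
    have := hGP p hpath hlen
    have hsub : ({c, e, d} : Set _) ⊆ A ∩ {x | x ∈ p.support} := by
      intro x hx
      rcases hx with rfl | rfl | rfl
      · exact ⟨hcA, by simp [hp]⟩
      · exact ⟨heA, by simp [hp]⟩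
      · exact ⟨hdA, by simp [hp]⟩
    have hfin : (A ∩ {x | x ∈ p.support}).Finite :=
      (p.support.finite_toSet).inter_of_right A
    have h3 : ({c, e, d} : Set _).ncard = 3 := by
      rw [Set.ncard_insert_of_notMem (by simp [hce, hcd]) (Set.toFinite _),
        Set.ncard_insert_of_notMem (by simp [Ne.symm hde]) (Set.toFinite _),
        Set.ncard_singleton]
    have := Set.ncard_le_ncard hsub hfin
    omega
  · intro hA u v p hpath hlen
    have hl2 : p.length ≤ 2 := hlen ▸ cmg_dist_le_two ht hr u v
    have pair_le : ∀ (a b : Σ j : Fin t, Fin (r j)) (s : Set (Σ j : Fin t, Fin (r j))),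
        s ⊆ {a, b} → s.ncard ≤ 2 := by
      intro a b s hs
      calc s.ncard ≤ ({a, b} : Set _).ncard := Set.ncard_le_ncard hs (Set.toFinite _)
        _ ≤ 1 + 1 := (Set.ncard_insert_le _ _).trans (by simp)
        _ = 2 := rfl
    cases p with
    | nil =>
      refine pair_le u u _ ?_
      intro x hx; simp at hx; simp [hx.2]
    | @cons _ w _ h q =>
      cases q with
      | nil =>
        refine pair_le u v _ ?_
        intro x hx
        simp only [Set.mem_inter_iff, Set.mem_setOf_eq, Walk.support_cons,
          Walk.support_nil, List.mem_cons, List.mem_singleton] at hx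
        simpa using hx.2
      | @cons _ w2 _ h' q' =>
        cases q' with
        | nil =>
          -- length-2 walk u - w - w2(=v)
          have hlen2 : (Walk.cons h (Walk.cons h' Walk.nil) : (G).Walk u v).length = 2 := by
            simp
          rcases hA with hm | htr
          · by_cases hwA : w ∈ A
            · refine pair_le w w _ ?_
              intro x hx
              simp only [Set.mem_inter_iff, Set.mem_setOf_eq, Walk.support_cons,
                Walk.support_nil, List.mem_cons, List.mem_singleton,
                List.not_mem_nil, or_false] at hx
              obtain ⟨hxA, hx'⟩ := hx
              rcases hx' with rfl | rfl | rfl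
              · exact absurd (hm x hxA w hwA) h
              · simp
              · exact absurd (hm w hwA x hxA) h'
            · refine pair_le u v _ ?_
              intro x hx
              simp only [Set.mem_inter_iff, Set.mem_setOf_eq, Walk.support_cons,
                Walk.support_nil, List.mem_cons, List.mem_singleton,
                List.not_mem_nil, or_false] at hx
              obtain ⟨hxA, hx'⟩ := hx
              rcases hx' with rfl | rfl | rfl
              · simp
              · exact absurd hxA hwA
              · simp
          · have hdist : (G).dist u v = 2 := by rw [← hlen, hlen2]
            have huv : u ≠ v := by
              intro h; subst h; rw [SimpleGraph.dist_self] at hdist; omega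
            have huv1 : u.1 = v.1 := by
              by_contra hne
              have : (G).dist u v = 1 := SimpleGraph.dist_eq_one_iff_adj.mpr hne
              omega
            have : ¬(u ∈ A ∧ v ∈ A) := by
              rintro ⟨h1, h2⟩; exact htr u h1 v h2 huv huv1
            by_cases huA : u ∈ A
            · refine pair_le u w _ ?_
              intro x hx
              simp only [Set.mem_inter_iff, Set.mem_setOf_eq, Walk.support_cons,
                Walk.support_nil, List.mem_cons, List.mem_singleton,
                List.not_mem_nil, or_false] at hx
              obtain ⟨hxA, hx'⟩ := hx
              rcases hx' with rfl | rfl | rfl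
              · simp
              · simp
              · exact absurd ⟨huA, hxA⟩ this
            · refine pair_le w v _ ?_
              intro x hx
              simp only [Set.mem_inter_iff, Set.mem_setOf_eq, Walk.support_cons,
                Walk.support_nil, List.mem_cons, List.mem_singleton,
                List.not_mem_nil, or_false] at hx
              obtain ⟨hxA, hx'⟩ := hx
              rcases hx' with rfl | rfl | rfl
              · exact absurd hxA huA
              · simp
              · simp
        | @cons _ _ _ h'' q'' =>
          simp only [Walk.length_cons] at hl2
          omega


open scoped Classical in
lemma gameValAux_zero {W : Type*} [Fintype W] (H : SimpleGraph W) (turn : Bool) (S : Finset W) :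
    gameValAux H 0 turn S = S.card := by
  rw [gameValAux]

open scoped Classical in
lemma gameValAux_succ {W : Type*} [Fintype W] (H : SimpleGraph W)
    (fuel : ℕ) (turn : Bool) (S : Finset W) :
    gameValAux H (fuel+1) turn S =
      if h : (playable H S).Nonempty then
        if turn then (playable H S).sup' h (fun v => gameValAux H fuel (!turn) (insert v S))
        else (playable H S).inf' h (fun v => gameValAux H fuel (!turn) (insert v S))
      else S.card := by
  rw [gameValAux]

lemma playable_mono (ht : 2 ≤ t) (hr : ∀ i, 2 ≤ r i) {i : Fin t}
    {S : Finset (Σ j : Fin t, Fin (r j))}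
    (hS : ∀ v ∈ S, v.1 = i) (hcard : 2 ≤ S.card) :
    playable G S = partFinset r i \ S := by
  obtain ⟨a, haS, b, hbS, hab⟩ := Finset.one_lt_card.mp hcard
  ext v
  simp only [playable, mem_filter, mem_univ, true_and, mem_sdiff, mem_partFinset]
  constructor
  · rintro ⟨hvS, hGP⟩
    refine ⟨?_, hvS⟩
    rcases (isGP_iff ht hr _).mp hGP with hm | htr
    · exact (hm v (by simp) a (by simp [haS])).trans (hS a haS)
    · exact absurd ((hS a haS).trans (hS b hbS).symm)
        (htr a (by simp [haS]) b (by simp [hbS]) hab)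
  · rintro ⟨hvi, hvS⟩
    refine ⟨hvS, (isGP_iff ht hr _).mpr (Or.inl ?_)⟩
    intro x hx y hy
    simp only [coe_insert, Set.mem_insert_iff, mem_coe] at hx hy
    have key : ∀ z : (j : Fin t) × Fin (r j), z = v ∨ z ∈ S → z.1 = i := by
      rintro z (rfl | hz)
      · exact hvi
      · exact hS z hz
    exact (key x hx).trans (key y hy).symm

lemma playable_trans (ht : 2 ≤ t) (hr : ∀ i, 2 ≤ r i)
    {S : Finset (Σ j : Fin t, Fin (r j))}
    (hS : ∀ u ∈ S, ∀ v ∈ S, u ≠ v → u.1 ≠ v.1) (hcard : 2 ≤ S.card) :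
    playable G S = univ.filter (fun v => v.1 ∉ S.image Sigma.fst) := by
  obtain ⟨a, haS, b, hbS, hab⟩ := Finset.one_lt_card.mp hcard
  have hab1 : a.1 ≠ b.1 := hS a haS b hbS hab
  ext v
  simp only [playable, mem_filter, mem_univ, true_and]
  constructor
  · rintro ⟨hvS, hGP⟩
    intro hmem
    obtain ⟨u, huS, hu1⟩ := Finset.mem_image.mp hmem
    have huv : u ≠ v := fun h => hvS (h ▸ huS)
    rcases (isGP_iff ht hr _).mp hGP with hm | htr
    · exact hab1 (hm a (by simp [haS]) b (by simp [hbS]))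
    · exact htr u (by simp [huS]) v (by simp) huv hu1
  · intro hmem
    have hvS : v ∉ S := fun h => hmem (Finset.mem_image.mpr ⟨v, h, rfl⟩)
    refine ⟨hvS, (isGP_iff ht hr _).mpr (Or.inr ?_)⟩
    intro x hx y hy hxy
    simp only [coe_insert, Set.mem_insert_iff, mem_coe] at hx hy
    rcases hx with rfl | hx <;> rcases hy with rfl | hy
    · exact absurd rfl hxy
    · exact fun h => hmem (Finset.mem_image.mpr ⟨y, hy, h.symm⟩)
    · exact fun h => hmem (Finset.mem_image.mpr ⟨x, hx, h⟩)
    · exact hS x hx y hy hxy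

lemma playable_singleton (ht : 2 ≤ t) (hr : ∀ i, 2 ≤ r i) (v : Σ j : Fin t, Fin (r j)) :
    playable G {v} = univ \ {v} := by
  ext w
  simp only [playable, mem_filter, mem_univ, true_and, mem_sdiff, mem_singleton]
  constructor
  · rintro ⟨h, _⟩; exact h
  · intro hwv
    refine ⟨hwv, (isGP_iff ht hr _).mpr ?_⟩
    by_cases h1 : w.1 = v.1
    · left; intro x hx y hy
      simp only [coe_insert, coe_singleton, Set.mem_insert_iff, Set.mem_singleton_iff] at hx hy
      rcases hx with rfl | rfl <;> rcases hy with rfl | rfl <;> simp [h1]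
    · right; intro x hx y hy hxy
      simp only [coe_insert, coe_singleton, Set.mem_insert_iff, Set.mem_singleton_iff] at hx hy
      rcases hx with rfl | rfl <;> rcases hy with rfl | rfl
      · exact absurd rfl hxy
      · exact h1
      · exact fun h => h1 h.symm
      · exact absurd rfl hxy

lemma playable_empty (ht : 2 ≤ t) (hr : ∀ i, 2 ≤ r i) :
    playable G (∅ : Finset (Σ j : Fin t, Fin (r j))) = univ := by
  ext v
  simp only [playable, mem_filter, mem_univ, true_and, notMem_empty, not_false_iff,
    true_and, iff_true]
  refine (isGP_iff ht hr _).mpr (Or.inl ?_)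
  intro x hx y hy
  simp only [insert_empty_eq, coe_singleton, Set.mem_singleton_iff] at hx hy
  rw [hx, hy]

lemma value_mono (ht : 2 ≤ t) (hr : ∀ i, 2 ≤ r i) {i : Fin t} :
    ∀ (fuel : ℕ) (turn : Bool) (S : Finset (Σ j : Fin t, Fin (r j))),
      (∀ v ∈ S, v.1 = i) → 2 ≤ S.card → r i ≤ S.card + fuel →
      gameValAux G fuel turn S = r i := by
  intro fuel
  induction fuel with
  | zero =>
    intro turn S hS hc hf
    have hsub : S ⊆ partFinset r i := fun v hv => mem_partFinset.mpr (hS v hv)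
    have := Finset.card_le_card hsub
    rw [card_partFinset] at this
    rw [gameValAux_zero]
    omega
  | succ fuel ih =>
    intro turn S hS hc hf
    have hsub : S ⊆ partFinset r i := fun v hv => mem_partFinset.mpr (hS v hv)
    have hpl : playable G S = partFinset r i \ S := playable_mono ht hr hS hc
    rw [gameValAux_succ]
    by_cases hne : (playable G S).Nonempty
    · rw [dif_pos hne]
      have hins : ∀ v ∈ playable G S, v.1 = i ∧ v ∉ S := by
        intro v hv
        rw [hpl, mem_sdiff, mem_partFinset] at hv
        exact hv
      cases turn with
      | true =>
        rw [if_pos rfl]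
        refine sup'_eq_const hne ?_
        intro v hv
        refine ih _ _ ?_ ?_ ?_
        · intro u hu
          rcases Finset.mem_insert.mp hu with rfl | hu
          · exact (hins _ hv).1
          · exact hS u hu
        · rw [Finset.card_insert_of_notMem (hins v hv).2]; omega
        · rw [Finset.card_insert_of_notMem (hins v hv).2]; omega
      | false =>
        rw [if_neg (by simp)]
        refine inf'_eq_const hne ?_
        intro v hv
        refine ih _ _ ?_ ?_ ?_
        · intro u hu
          rcases Finset.mem_insert.mp hu with rfl | hu
          · exact (hins _ hv).1
          · exact hS u hu
        · rw [Finset.card_insert_of_notMem (hins v hv).2]; omega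
        · rw [Finset.card_insert_of_notMem (hins v hv).2]; omega
    · rw [dif_neg hne]
      rw [hpl, Finset.not_nonempty_iff_eq_empty, Finset.sdiff_eq_empty_iff_subset] at hne
      rw [Finset.Subset.antisymm hsub hne, card_partFinset]

lemma value_trans (ht : 2 ≤ t) (hr : ∀ i, 2 ≤ r i) :
    ∀ (fuel : ℕ) (turn : Bool) (S : Finset (Σ j : Fin t, Fin (r j))),
      (∀ u ∈ S, ∀ v ∈ S, u ≠ v → u.1 ≠ v.1) → 2 ≤ S.card → t ≤ S.card + fuel →
      gameValAux G fuel turn S = t := by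
  intro fuel
  induction fuel with
  | zero =>
    intro turn S hS hc hf
    have hinj : Set.InjOn Sigma.fst (S : Set ((j : Fin t) × Fin (r j))) := by
      intro x hx y hy hxy
      by_contra hne
      exact hS x hx y hy hne hxy
    have h1 : (S.image Sigma.fst).card = S.card := Finset.card_image_of_injOn hinj
    have h2 : (S.image Sigma.fst).card ≤ t := by
      have := Finset.card_le_univ (S.image Sigma.fst)
      simpa using this
    rw [gameValAux_zero]
    omega
  | succ fuel ih =>
    intro turn S hS hc hf
    have hinj : Set.InjOn Sigma.fst (S : Set ((j : Fin t) × Fin (r j))) := by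
      intro x hx y hy hxy
      by_contra hne
      exact hS x hx y hy hne hxy
    have h1 : (S.image Sigma.fst).card = S.card := Finset.card_image_of_injOn hinj
    have hpl : playable G S = univ.filter (fun v => v.1 ∉ S.image Sigma.fst) :=
      playable_trans ht hr hS hc
    rw [gameValAux_succ]
    by_cases hne : (playable G S).Nonempty
    · rw [dif_pos hne]
      have hins : ∀ v ∈ playable G S, v.1 ∉ S.image Sigma.fst := by
        intro v hv
        rw [hpl, mem_filter] at hv
        exact hv.2
      have hnotS : ∀ v ∈ playable G S, v ∉ S := by
        intro v hv h
        exact hins v hv (Finset.mem_image.mpr ⟨v, h, rfl⟩)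
      have htr : ∀ v ∈ playable G S, ∀ x ∈ insert v S, ∀ y ∈ insert v S,
          x ≠ y → x.1 ≠ y.1 := by
        intro v hv x hx y hy hxy
        rcases Finset.mem_insert.mp hx with hx' | hx' <;>
          rcases Finset.mem_insert.mp hy with hy' | hy'
        · exact absurd (hx'.trans hy'.symm) hxy
        · subst hx'; exact fun h => hins _ hv (Finset.mem_image.mpr ⟨y, hy', h.symm⟩)
        · subst hy'; exact fun h => hins _ hv (Finset.mem_image.mpr ⟨x, hx', h⟩)
        · exact hS x hx' y hy' hxy
      cases turn with
      | true =>
        rw [if_pos rfl]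
        refine sup'_eq_const hne ?_
        intro v hv
        refine ih _ _ (htr v hv) ?_ ?_
        · rw [Finset.card_insert_of_notMem (hnotS v hv)]; omega
        · rw [Finset.card_insert_of_notMem (hnotS v hv)]; omega
      | false =>
        rw [if_neg (by simp)]
        refine inf'_eq_const hne ?_
        intro v hv
        refine ih _ _ (htr v hv) ?_ ?_
        · rw [Finset.card_insert_of_notMem (hnotS v hv)]; omega
        · rw [Finset.card_insert_of_notMem (hnotS v hv)]; omega
    · rw [dif_neg hne]
      rw [hpl, Finset.not_nonempty_iff_eq_empty] at hne
      have himg : (univ : Finset (Fin t)) ⊆ S.image Sigma.fst := by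
        intro j _
        by_contra hj
        have : (⟨j, ⟨0, by have := hr j; omega⟩⟩ : Σ j : Fin t, Fin (r j)) ∈
            univ.filter (fun v : Σ j : Fin t, Fin (r j) => v.1 ∉ S.image Sigma.fst) := by
          rw [mem_filter]
          exact ⟨mem_univ _, hj⟩
        rw [hne] at this
        exact absurd this (notMem_empty _)
      have : (S.image Sigma.fst).card = t := by
        have h2 := Finset.card_le_univ (S.image Sigma.fst)
        have h3 := Finset.card_le_card himg
        simp at h2 h3
        omega
      omega

lemma value_single (ht : 2 ≤ t) (hr : ∀ i, 2 ≤ r i) (v : Σ j : Fin t, Fin (r j))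
    (fuel : ℕ) (turn : Bool) (hf1 : r v.1 ≤ 2 + fuel) (hf2 : t ≤ 2 + fuel) :
    gameValAux G (fuel + 1) turn {v} = if turn then max (r v.1) t else min (r v.1) t := by
  have hpl : playable G {v} = univ \ {v} := playable_singleton ht hr v
  -- a same-part partner of v
  obtain ⟨b, hb⟩ : ∃ b : Fin (r v.1), b ≠ v.2 :=
    Fintype.exists_ne_of_one_lt_card (by simp; have := hr v.1; omega) v.2
  set w0 : Σ j : Fin t, Fin (r j) := ⟨v.1, b⟩ with hw0
  have hw0v : w0 ≠ v := by
    intro h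
    exact hb (eq_of_heq (Sigma.mk.inj_iff.mp h).2)
  have hw0pl : w0 ∈ playable G {v} := by
    rw [hpl, mem_sdiff, mem_singleton]
    exact ⟨mem_univ _, hw0v⟩
  -- a different-part vertex
  obtain ⟨j, hj⟩ := exists_other ht v.1
  set w1 : Σ j : Fin t, Fin (r j) := ⟨j, ⟨0, by have := hr j; omega⟩⟩ with hw1
  have hw1v : w1.1 ≠ v.1 := hj
  have hw1pl : w1 ∈ playable G {v} := by
    rw [hpl, mem_sdiff, mem_singleton]
    exact ⟨mem_univ _, fun h => hj (congrArg Sigma.fst h)⟩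
  have hne : (playable G {v}).Nonempty := ⟨w0, hw0pl⟩
  have hval : ∀ w ∈ playable G {v}, gameValAux G fuel (!turn) (insert w {v}) =
      if w.1 = v.1 then r v.1 else t := by
    intro w hw
    rw [hpl, mem_sdiff, mem_singleton] at hw
    by_cases h1 : w.1 = v.1
    · rw [if_pos h1]
      refine value_mono ht hr fuel (!turn) _ ?_
        (by rw [Finset.card_insert_of_notMem (by simp [hw.2]), Finset.card_singleton])
        (by rw [Finset.card_insert_of_notMem (by simp [hw.2]), Finset.card_singleton]; omega)
      intro u hu
      rcases Finset.mem_insert.mp hu with hu' | hu'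
      · rw [hu']; exact h1
      · rw [Finset.mem_singleton] at hu'; rw [hu']
    · rw [if_neg h1]
      refine value_trans ht hr fuel (!turn) _ ?_
        (by rw [Finset.card_insert_of_notMem (by simp [hw.2]), Finset.card_singleton])
        (by rw [Finset.card_insert_of_notMem (by simp [hw.2]), Finset.card_singleton]; omega)
      intro x hx y hy hxy
      rcases Finset.mem_insert.mp hx with hx' | hx' <;>
        rcases Finset.mem_insert.mp hy with hy' | hy'
      · exact absurd (hx'.trans hy'.symm) hxy
      · rw [Finset.mem_singleton] at hy'
        rw [hx', hy']
        exact h1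
      · rw [Finset.mem_singleton] at hx'
        rw [hx', hy']
        exact fun h => h1 h.symm
      · rw [Finset.mem_singleton] at hx' hy'
        exact absurd (hx'.trans hy'.symm) hxy
  rw [gameValAux_succ, dif_pos hne]
  have hfw0 : gameValAux G fuel (!turn) (insert w0 {v}) = r v.1 := by
    rw [hval w0 hw0pl, if_pos rfl]
  have hfw1 : gameValAux G fuel (!turn) (insert w1 {v}) = t := by
    rw [hval w1 hw1pl, if_neg hw1v]
  cases turn with
  | true =>
    rw [if_pos rfl, if_pos rfl]
    refine le_antisymm (Finset.sup'_le _ _ fun w hw => ?_) (max_le ?_ ?_)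
    · rw [hval w hw]
      split
      · exact le_max_left _ _
      · exact le_max_right _ _
    · have := Finset.le_sup' (fun w => gameValAux G fuel (!true) (insert w {v})) hw0pl
      rw [hfw0] at this
      exact this
    · have := Finset.le_sup' (fun w => gameValAux G fuel (!true) (insert w {v})) hw1pl
      rw [hfw1] at this
      exact this
  | false =>
    rw [if_neg (by simp), if_neg (by simp)]
    refine le_antisymm (le_min ?_ ?_) (Finset.le_inf' _ _ fun w hw => ?_)
    · have := Finset.inf'_le (fun w => gameValAux G fuel (!false) (insert w {v})) hw0pl
      rw [hfw0] at this
      exact this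
    · have := Finset.inf'_le (fun w => gameValAux G fuel (!false) (insert w {v})) hw1pl
      rw [hfw1] at this
      exact this
    · rw [hval w hw]
      split
      · exact min_le_left _ _
      · exact min_le_right _ _

end CM

/-- The game general position numbers of complete multipartite graphs: if
`r₁ ≥ ⋯ ≥ r_t ≥ 2` and `t ≥ 2`, then `gpg = min{r₁, t}` and `gpg' = max{r_t, t}`. -/
theorem stmt_6 (t : ℕ) (ht : 2 ≤ t) (r : Fin t → ℕ)
    (hanti : ∀ i j : Fin t, i ≤ j → r j ≤ r i) (hr : ∀ i, 2 ≤ r i) :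
    gpg (completeMultipartiteGraph (fun i : Fin t => Fin (r i))) = min (r ⟨0, by omega⟩) t ∧
    gpg' (completeMultipartiteGraph (fun i : Fin t => Fin (r i))) = max (r ⟨t - 1, by omega⟩) t := by
  have hN : Fintype.card ((j : Fin t) × Fin (r j)) = ∑ j, r j := by
    simp [Fintype.card_sigma]
  have hrleN : ∀ j : Fin t, r j ≤ Fintype.card ((j : Fin t) × Fin (r j)) := by
    intro j
    rw [hN]
    exact Finset.single_le_sum (f := r) (fun i _ => Nat.zero_le _) (mem_univ j)
  have htN : 2 * t ≤ Fintype.card ((j : Fin t) × Fin (r j)) := by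
    rw [hN]
    calc 2 * t = ∑ _j : Fin t, 2 := by simp [mul_comm]
    _ ≤ ∑ j, r j := Finset.sum_le_sum (fun i _ => hr i)
  have hN4 : 4 ≤ Fintype.card ((j : Fin t) × Fin (r j)) := by omega
  have hNsplit : Fintype.card ((j : Fin t) × Fin (r j)) =
      (Fintype.card ((j : Fin t) × Fin (r j)) - 2) + 1 + 1 := by omega
  have huniv : (univ : Finset ((j : Fin t) × Fin (r j))).Nonempty :=
    ⟨⟨⟨0, by omega⟩, ⟨0, by have := hr ⟨0, by omega⟩; omega⟩⟩, mem_univ _⟩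
  constructor
  · show gameVal _ true ∅ = _
    rw [gameVal, Finset.card_empty, Nat.sub_zero, hNsplit, gameValAux_succ,
      playable_empty ht hr, dif_pos huniv, if_pos rfl]
    simp only [Bool.not_true, insert_empty_eq]
    refine le_antisymm (Finset.sup'_le _ _ ?_) ?_
    · intro v _
      rw [value_single ht hr v _ false (le_trans (hrleN _) (by omega)) (by omega),
        if_neg (by simp)]
      exact min_le_min (hanti _ _ (Fin.le_def.mpr (Nat.zero_le _))) le_rfl
    · refine le_trans ?_ (Finset.le_sup'
        _ (mem_univ (⟨⟨0, by omega⟩, ⟨0, by have := hr ⟨0, by omega⟩; omega⟩⟩ :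
          (j : Fin t) × Fin (r j))))
      rw [value_single ht hr _ _ false (le_trans (hrleN _) (by omega)) (by omega),
        if_neg (by simp)]
  · show gameVal _ false ∅ = _
    rw [gameVal, Finset.card_empty, Nat.sub_zero, hNsplit, gameValAux_succ,
      playable_empty ht hr, dif_pos huniv, if_neg (by simp)]
    simp only [Bool.not_false, insert_empty_eq]
    refine le_antisymm ?_ (Finset.le_inf' _ _ ?_)
    · refine le_trans (Finset.inf'_le
        _ (mem_univ (⟨⟨t - 1, by omega⟩, ⟨0, by have := hr ⟨t - 1, by omega⟩; omega⟩⟩ :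
          (j : Fin t) × Fin (r j)))) ?_
      rw [value_single ht hr _ _ true (le_trans (hrleN _) (by omega)) (by omega),
        if_pos rfl]
    · intro v _
      rw [value_single ht hr v _ true (le_trans (hrleN _) (by omega)) (by omega),
        if_pos rfl]
      exact max_le_max (hanti _ _ (Fin.le_def.mpr (by simpa using Nat.le_sub_one_of_lt v.1.isLt))) le_rfl
end

section
/- For any integers a, b, c with 2 ≤ c ≤ b ≤ a there exists a finite connected graph G with gp(G) = a, gpg(G) = b and gp⁻(G) = c. -/
open Finset SimpleGraph

variable {V : Type*}

/-- The general position number: the largest size of a general position set. -/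
noncomputable def gpNum [Fintype V] (G : SimpleGraph V) : ℕ :=
  sSup {n | ∃ S : Finset V, IsGPSet G ↑S ∧ S.card = n}

/-- A maximal (under inclusion) general position set. -/
def IsMaximalGPSet (G : SimpleGraph V) (S : Set V) : Prop :=
  IsGPSet G S ∧ ∀ v ∉ S, ¬ IsGPSet G (insert v S)

/-- The lower general position number: the smallest size of a maximal general position set. -/
noncomputable def gpLower [Fintype V] (G : SimpleGraph V) : ℕ :=
  sInf {n | ∃ S : Finset V, IsMaximalGPSet G ↑S ∧ S.card = n}

namespace Stmt7

def sz (b c : ℕ) (i : ℕ) : ℕ := if i = 0 then b else c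

abbrev Vtx (a b c : ℕ) : Type := Σ i : Fin a, Fin (sz b c i.val)

def Gr (a b c : ℕ) : SimpleGraph (Vtx a b c) where
  Adj u v := u.1 ≠ v.1
  symm := ⟨fun _ _ h => Ne.symm h⟩
  loopless := ⟨fun _ h => h rfl⟩

variable {a b c : ℕ}

lemma adj_iff {u v : Vtx a b c} : (Gr a b c).Adj u v ↔ u.1 ≠ v.1 := Iff.rfl

/-- at most one vertex per part -/
def Trans (S : Set (Vtx a b c)) : Prop := ∀ u ∈ S, ∀ v ∈ S, u.1 = v.1 → u = v

/-- all vertices in one part -/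
def Mono (S : Set (Vtx a b c)) : Prop := ∀ u ∈ S, ∀ v ∈ S, u.1 = v.1

section Basic

variable (hc : 2 ≤ c) (hcb : c ≤ b) (hba : b ≤ a)

include hc hcb in
lemma sz_pos (i : ℕ) : 0 < sz b c i := by unfold sz; split <;> omega

include hc hcb in
lemma two_le_sz (i : ℕ) : 2 ≤ sz b c i := by unfold sz; split <;> omega

include hcb in
lemma sz_le_b (i : ℕ) : sz b c i ≤ b := by unfold sz; split <;> omega

include hc hcb hba in
lemma two_le_a : 2 ≤ a := le_trans hc (le_trans hcb hba)

include hc hcb hba in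
lemma exists_other_part (i : Fin a) : ∃ j : Fin a, j ≠ i := by
  have : Nontrivial (Fin a) := Fin.nontrivial_iff_two_le.mpr (two_le_a hc hcb hba)
  exact exists_ne i

/-- a canonical vertex in part `j` -/
def vtx0 (hc : 2 ≤ c) (hcb : c ≤ b) (j : Fin a) : Vtx a b c := ⟨j, ⟨0, sz_pos hc hcb _⟩⟩

@[simp] lemma vtx0_fst (j : Fin a) : (vtx0 hc hcb j : Vtx a b c).1 = j := rfl

include hc hcb hba in
lemma gr_connected : (Gr a b c).Connected := by
  have ha : 0 < a := by have := two_le_a hc hcb hba; omega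
  rw [SimpleGraph.connected_iff]
  refine ⟨fun u v => ?_, ⟨⟨⟨0, ha⟩, ⟨0, sz_pos hc hcb _⟩⟩⟩⟩
  by_cases huv : u.1 = v.1
  · obtain ⟨j, hj⟩ := exists_other_part hc hcb hba u.1
    have h1 : (Gr a b c).Adj u (vtx0 hc hcb j) := fun e => hj (Eq.symm e)
    have h2 : (Gr a b c).Adj (vtx0 hc hcb j) v := fun e => hj (huv ▸ e)
    exact h1.reachable.trans h2.reachable
  · exact (SimpleGraph.Adj.reachable (huv : (Gr a b c).Adj u v))

end Basic
end Stmt7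
namespace Stmt7
section Dist

variable {a b c : ℕ} (hc : 2 ≤ c) (hcb : c ≤ b) (hba : b ≤ a)

include hc hcb hba in
lemma dist_eq_two {u v : Vtx a b c} (huv : u.1 = v.1) (hne : u ≠ v) :
    (Gr a b c).dist u v = 2 := by
  obtain ⟨j, hj⟩ := exists_other_part hc hcb hba u.1
  have h1 : (Gr a b c).Adj u (vtx0 hc hcb j) := fun e => hj (Eq.symm e)
  have h2 : (Gr a b c).Adj (vtx0 hc hcb j) v := fun e => hj (huv ▸ e)
  have hle := SimpleGraph.dist_le (SimpleGraph.Walk.cons h1 (SimpleGraph.Walk.cons h2 SimpleGraph.Walk.nil))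
  simp only [SimpleGraph.Walk.length_cons, SimpleGraph.Walk.length_nil] at hle
  have hr : (Gr a b c).Reachable u v :=
    (SimpleGraph.Walk.cons h1 (SimpleGraph.Walk.cons h2 SimpleGraph.Walk.nil)).reachable
  have h0 : 0 < (Gr a b c).dist u v := hr.pos_dist_of_ne hne
  have h1' : (Gr a b c).dist u v ≠ 1 := by
    intro h
    exact (SimpleGraph.dist_eq_one_iff_adj.mp h) huv
  omega

include hc hcb hba in
lemma dist_le_two (u v : Vtx a b c) : (Gr a b c).dist u v ≤ 2 := by
  by_cases huv : u.1 = v.1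
  · by_cases h : u = v
    · simp [h, SimpleGraph.dist_self]
    · exact le_of_eq (dist_eq_two hc hcb hba huv h)
  · have : (Gr a b c).Adj u v := huv
    rw [SimpleGraph.dist_eq_one_iff_adj.mpr this]; omega

include hc hcb hba in
lemma gp_iff (S : Set (Vtx a b c)) :
    IsGPSet (Gr a b c) S ↔ Trans S ∨ Mono S := by
  constructor
  · -- contrapositive
    intro hgp
    by_contra hcl
    push_neg at hcl
    obtain ⟨hT, hM⟩ := hcl
    unfold Trans at hT; push_neg at hT
    unfold Mono at hM; push_neg at hM
    obtain ⟨u, hu, v, hv, hpart, hneq⟩ := hT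
    obtain ⟨x, hx, y, hy, hxy⟩ := hM
    -- pick w ∈ S with w.1 ≠ u.1
    obtain ⟨w, hw, hwu⟩ : ∃ w ∈ S, w.1 ≠ u.1 := by
      by_cases h : x.1 = u.1
      · exact ⟨y, hy, fun e => hxy (h ▸ e ▸ rfl)⟩
      · exact ⟨x, hx, h⟩
    have h1 : (Gr a b c).Adj u w := fun e => hwu e.symm
    have h2 : (Gr a b c).Adj w v := fun e => hwu (hpart ▸ e)
    set p : (Gr a b c).Walk u v :=
      SimpleGraph.Walk.cons h1 (SimpleGraph.Walk.cons h2 SimpleGraph.Walk.nil) with hp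
    have hwv : w ≠ v := fun e => hwu (by rw [e, ← hpart])
    have huw : u ≠ w := fun e => hwu (by rw [← e])
    have hpath : p.IsPath := by
      rw [SimpleGraph.Walk.isPath_def]
      simp [hp, huw, hneq, hwv]
    have hlen : p.length = (Gr a b c).dist u v := by
      simp [hp, dist_eq_two hc hcb hba hpart hneq]
    have := hgp p hpath hlen
    have hsub : ({u, w, v} : Set (Vtx a b c)) ⊆ S ∩ {x | x ∈ p.support} := by
      intro z hz
      rcases hz with rfl | rfl | rfl <;> simp [hp, hu, hw, hv]
    have hfin : (S ∩ {x | x ∈ p.support}).Finite :=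
      Set.Finite.inter_of_right (p.support.finite_toSet) S
    have h3 : ({u, w, v} : Set (Vtx a b c)).ncard = 3 := by
      rw [Set.ncard_insert_of_notMem (by simp [huw, hneq]), Set.ncard_pair hwv]
    have := Set.ncard_le_ncard hsub hfin
    omega
  · rintro hcl u v p hpath hlen
    have hle2 : p.length ≤ 2 := hlen ▸ dist_le_two hc hcb hba u v
    match p, hpath, hlen with
    | SimpleGraph.Walk.nil, _, _ =>
      have : S ∩ {x | x ∈ (SimpleGraph.Walk.nil : (Gr a b c).Walk u u).support} ⊆ {u} := by
        intro z hz; simp at hz; simp [hz.2]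
      calc (S ∩ _).ncard ≤ ({u} : Set _).ncard := Set.ncard_le_ncard this (Set.finite_singleton u)
        _ ≤ 2 := by simp [Set.ncard_singleton]
    | SimpleGraph.Walk.cons h SimpleGraph.Walk.nil, _, _ =>
      have : S ∩ {x | x ∈ (SimpleGraph.Walk.cons h SimpleGraph.Walk.nil).support} ⊆ {u, v} := by
        intro z hz; simp at hz; rcases hz.2 with h1 | h1 <;> simp [h1]
      calc (S ∩ _).ncard ≤ ({u, v} : Set _).ncard :=
            Set.ncard_le_ncard this (Set.toFinite _)
        _ ≤ 2 := (Set.ncard_insert_le _ _).trans (by simp)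
    | SimpleGraph.Walk.cons (v := w) h (SimpleGraph.Walk.cons h' SimpleGraph.Walk.nil), hpath, hlen =>
      -- length-2 shortest path u - w - v
      have hd2 : (Gr a b c).dist u v = 2 := by simpa using hlen.symm
      have hne : u ≠ v := by
        intro e; subst e; simp [SimpleGraph.dist_self] at hd2
      have hnadj : ¬ (Gr a b c).Adj u v := by
        intro hadj; rw [SimpleGraph.dist_eq_one_iff_adj.mpr hadj] at hd2; omega
      have hpart : u.1 = v.1 := not_not.mp hnadj
      have hwu : w.1 ≠ u.1 := fun e => h e.symm
      have hnot : ¬ (u ∈ S ∧ w ∈ S ∧ v ∈ S) := by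
        rintro ⟨hu, hw, hv⟩
        rcases hcl with hT | hM
        · exact hne (hT u hu v hv hpart)
        · exact hwu (hM w hw u hu)
      have hsupp : {x | x ∈ (SimpleGraph.Walk.cons h (SimpleGraph.Walk.cons h' SimpleGraph.Walk.nil)).support}
          = {u, w, v} := by
        ext z; simp [Set.mem_insert_iff]
      rw [hsupp]
      by_cases hu : u ∈ S
      · by_cases hw : w ∈ S
        · have hv : v ∉ S := fun hv => hnot ⟨hu, hw, hv⟩
          have : S ∩ {u, w, v} ⊆ {u, w} := by
            intro z hz
            rcases hz.2 with h1 | h1 | h1 <;> simp [h1] <;> exact absurd (h1 ▸ hz.1) hv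
          calc (S ∩ _).ncard ≤ ({u, w} : Set _).ncard := Set.ncard_le_ncard this (Set.toFinite _)
            _ ≤ 2 := (Set.ncard_insert_le _ _).trans (by simp)
        · have : S ∩ {u, w, v} ⊆ {u, v} := by
            intro z hz
            rcases hz.2 with h1 | h1 | h1
            · simp [h1]
            · exact absurd (h1 ▸ hz.1) hw
            · simp [h1]
          calc (S ∩ _).ncard ≤ ({u, v} : Set _).ncard := Set.ncard_le_ncard this (Set.toFinite _)
            _ ≤ 2 := (Set.ncard_insert_le _ _).trans (by simp)
      · have : S ∩ {u, w, v} ⊆ {w, v} := by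
          intro z hz
          rcases hz.2 with h1 | h1 | h1
          · exact absurd (h1 ▸ hz.1) hu
          · simp [h1]
          · simp [h1]
        calc (S ∩ _).ncard ≤ ({w, v} : Set _).ncard := Set.ncard_le_ncard this (Set.toFinite _)
          _ ≤ 2 := (Set.ncard_insert_le _ _).trans (by simp)
    | SimpleGraph.Walk.cons _ (SimpleGraph.Walk.cons _ (SimpleGraph.Walk.cons _ _)), _, _ =>
      simp at hle2

end Dist
end Stmt7
namespace Stmt7
section Game

variable {a b c : ℕ} (hc : 2 ≤ c) (hcb : c ≤ b) (hba : b ≤ a)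

lemma sup'_eq_of {α : Type*} {s : Finset α} (h : s.Nonempty) {f : α → ℕ} {k : ℕ}
    (hf : ∀ v ∈ s, f v = k) : s.sup' h f = k := by
  obtain ⟨v, hv⟩ := h
  exact le_antisymm (Finset.sup'_le _ f fun w hw => (hf w hw).le)
    ((hf v hv).ge.trans (Finset.le_sup' f hv))

lemma inf'_eq_of {α : Type*} {s : Finset α} (h : s.Nonempty) {f : α → ℕ} {k : ℕ}
    (hf : ∀ v ∈ s, f v = k) : s.inf' h f = k := by
  obtain ⟨v, hv⟩ := h
  exact le_antisymm ((Finset.inf'_le f hv).trans (hf v hv).le)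
    (Finset.le_inf' _ f fun w hw => (hf w hw).ge)

include hc hcb hba in
lemma mem_playable {S : Finset (Vtx a b c)} {v : Vtx a b c} :
    v ∈ playable (Gr a b c) S ↔
      v ∉ S ∧ (Trans (insert v (↑S : Set (Vtx a b c))) ∨ Mono (insert v ↑S)) := by
  classical
  simp only [playable, Finset.mem_filter, Finset.mem_univ, true_and,
    gp_iff hc hcb hba, Finset.coe_insert]

noncomputable def partF (a b c : ℕ) (i : Fin a) : Finset (Vtx a b c) := by
  classical exact Finset.univ.filter (fun v => v.1 = i)

lemma mem_partF {i : Fin a} {v : Vtx a b c} : v ∈ partF a b c i ↔ v.1 = i := by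
  classical simp [partF]

lemma card_partF (i : Fin a) : (partF a b c i).card = sz b c i.val := by
  classical
  have : partF a b c i =
      (Finset.univ : Finset (Fin (sz b c i.val))).map
        ⟨Sigma.mk i, sigma_mk_injective⟩ := by
    ext ⟨v1, v2⟩
    simp only [mem_partF, Finset.mem_map, Finset.mem_univ, true_and,
      Function.Embedding.coeFn_mk]
    constructor
    · rintro rfl; exact ⟨v2, rfl⟩
    · rintro ⟨j, hj⟩; cases hj; rfl
  rw [this, Finset.card_map, Finset.card_univ, Fintype.card_fin]

include hc hcb hba in
lemma mono_playable {S : Finset (Vtx a b c)} {i : Fin a}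
    (hS : ∀ v ∈ S, v.1 = i) (h2 : 2 ≤ S.card) {v : Vtx a b c} :
    v ∈ playable (Gr a b c) S ↔ v ∉ S ∧ v.1 = i := by
  obtain ⟨x, hx, y, hy, hxy⟩ := Finset.one_lt_card.mp h2
  have hnotTrans : ∀ w : Vtx a b c, ¬ Trans (insert w (↑S : Set (Vtx a b c))) := by
    intro w hT
    exact hxy (hT x (Set.mem_insert_of_mem _ hx) y (Set.mem_insert_of_mem _ hy)
      ((hS x hx).trans (hS y hy).symm))
  rw [mem_playable hc hcb hba]
  constructor
  · rintro ⟨hvS, hT | hM⟩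
    · exact absurd hT (hnotTrans v)
    · exact ⟨hvS, (hM v (Set.mem_insert _ _) x (Set.mem_insert_of_mem _ hx)).trans (hS x hx)⟩
  · rintro ⟨hvS, hvi⟩
    refine ⟨hvS, Or.inr ?_⟩
    intro z hz w hw
    have hz' : z.1 = i := by
      rcases hz with rfl | hz; exact hvi; exact hS z hz
    have hw' : w.1 = i := by
      rcases hw with rfl | hw; exact hvi; exact hS w hw
    rw [hz', hw']

include hc hcb hba in
lemma trans_playable {S : Finset (Vtx a b c)}
    (hS : Trans (↑S : Set (Vtx a b c))) (h2 : 2 ≤ S.card) {v : Vtx a b c} :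
    v ∈ playable (Gr a b c) S ↔ v.1 ∉ S.image Sigma.fst := by
  classical
  obtain ⟨x, hx, y, hy, hxy⟩ := Finset.one_lt_card.mp h2
  have hxy1 : x.1 ≠ y.1 := fun e => hxy (hS x hx y hy e)
  have hnotMono : ∀ w : Vtx a b c, ¬ Mono (insert w (↑S : Set (Vtx a b c))) := by
    intro w hM
    exact hxy1 (hM x (Set.mem_insert_of_mem _ hx) y (Set.mem_insert_of_mem _ hy))
  rw [mem_playable hc hcb hba]
  constructor
  · rintro ⟨hvS, hT | hM⟩
    · intro hmem
      obtain ⟨x, hx, hx1⟩ := Finset.mem_image.mp hmem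
      exact hvS (hT v (Set.mem_insert _ _) x (Set.mem_insert_of_mem _ hx) hx1.symm ▸ hx)
    · exact absurd hM (hnotMono v)
  · intro hmem
    have hvS : v ∉ S := fun h => hmem (Finset.mem_image_of_mem _ h)
    refine ⟨hvS, Or.inl ?_⟩
    intro z hz w hw hzw
    rcases hz with rfl | hz
    · rcases hw with rfl | hw
      · rfl
      · exact absurd (hzw ▸ Finset.mem_image_of_mem Sigma.fst hw) hmem
    · rcases hw with rfl | hw
      · exact absurd (hzw ▸ Finset.mem_image_of_mem Sigma.fst hz) hmem
      · exact hS z hz w hw hzw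

end Game
end Stmt7
namespace Stmt7
section GameVal

variable {a b c : ℕ} (hc : 2 ≤ c) (hcb : c ≤ b) (hba : b ≤ a)

include hc hcb hba in
/-- Once the selected set has ≥ 2 vertices inside one part, the game ends with that
whole part selected. -/
lemma mono_val : ∀ (fuel : ℕ) (t : Bool) (S : Finset (Vtx a b c)) (i : Fin a),
    (∀ v ∈ S, v.1 = i) → 2 ≤ S.card → sz b c i.val ≤ S.card + fuel →
    gameValAux (Gr a b c) fuel t S = sz b c i.val := by
  intro fuel
  induction fuel with
  | zero =>
    intro t S i hS h2 hfuel
    have hsub : S ⊆ partF a b c i := fun v hv => mem_partF.mpr (hS v hv)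
    have := Finset.card_le_card hsub
    rw [card_partF] at this
    show S.card = sz b c i.val
    omega
  | succ fuel IH =>
    intro t S i hS h2 hfuel
    have hsub : S ⊆ partF a b c i := fun v hv => mem_partF.mpr (hS v hv)
    simp only [gameValAux]
    by_cases hne : (playable (Gr a b c) S).Nonempty
    · rw [dif_pos hne]
      have key : ∀ (t' : Bool) (v : Vtx a b c), v ∈ playable (Gr a b c) S →
          ∀ (S' : Finset (Vtx a b c)), (∀ u, u ∈ S' ↔ u = v ∨ u ∈ S) →
          gameValAux (Gr a b c) fuel t' S' = sz b c i.val := by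
        intro t' v hv S' hS'
        obtain ⟨hvS, hvi⟩ := (mono_playable hc hcb hba hS h2).mp hv
        have hS' : S' = insert v S := Finset.ext fun u => by
          rw [hS' u, Finset.mem_insert]
        refine IH t' S' i ?_ ?_ ?_
        · intro u hu
          rw [hS'] at hu
          rcases Finset.mem_insert.mp hu with rfl | hu
          · exact hvi
          · exact hS u hu
        · rw [hS', Finset.card_insert_of_notMem hvS]; omega
        · rw [hS', Finset.card_insert_of_notMem hvS]; omega
      cases t
      · simp only [Bool.false_eq_true, if_false]
        exact inf'_eq_of hne fun v hv => key _ v hv _ (fun u => by simp [Finset.mem_insert])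
      · simp only [if_true]
        exact sup'_eq_of hne fun v hv => key _ v hv _ (fun u => by simp [Finset.mem_insert])
    · rw [dif_neg hne]
      have hsup : partF a b c i ⊆ S := by
        intro v hv
        by_contra hvS
        exact hne ⟨v, (mono_playable hc hcb hba hS h2).mpr ⟨hvS, mem_partF.mp hv⟩⟩
      rw [Finset.Subset.antisymm hsub hsup, card_partF]

end GameVal
end Stmt7
namespace Stmt7
section GameVal2

variable {a b c : ℕ} (hc : 2 ≤ c) (hcb : c ≤ b) (hba : b ≤ a)

lemma card_image_fst {S : Finset (Vtx a b c)} (hS : Trans (↑S : Set (Vtx a b c))) :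
    (S.image Sigma.fst).card = S.card := by
  classical
  exact Finset.card_image_of_injOn fun x hx y hy e => hS x hx y hy e

include hc hcb hba in
/-- Once the selected set is a transversal with ≥ 2 vertices, the game ends
with a full transversal: one vertex in each of the `a` parts. -/
lemma trans_val : ∀ (fuel : ℕ) (t : Bool) (S : Finset (Vtx a b c)),
    Trans (↑S : Set (Vtx a b c)) → 2 ≤ S.card → a ≤ S.card + fuel →
    gameValAux (Gr a b c) fuel t S = a := by
  classical
  intro fuel
  induction fuel with
  | zero =>
    intro t S hS h2 hfuel
    have h1 : (S.image Sigma.fst).card ≤ a := by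
      have := Finset.card_le_univ (S.image Sigma.fst)
      simpa using this
    rw [card_image_fst hS] at h1
    show S.card = a
    omega
  | succ fuel IH =>
    intro t S hS h2 hfuel
    have h1 : S.card ≤ a := by
      have := Finset.card_le_univ (S.image Sigma.fst)
      rw [card_image_fst hS] at this
      simpa using this
    simp only [gameValAux]
    by_cases hne : (playable (Gr a b c) S).Nonempty
    · rw [dif_pos hne]
      have key : ∀ (t' : Bool) (v : Vtx a b c), v ∈ playable (Gr a b c) S →
          ∀ (S' : Finset (Vtx a b c)), (∀ u, u ∈ S' ↔ u = v ∨ u ∈ S) →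
          gameValAux (Gr a b c) fuel t' S' = a := by
        intro t' v hv S' hS'mem
        have hvim := (trans_playable hc hcb hba hS h2).mp hv
        have hvS : v ∉ S := fun h => hvim (Finset.mem_image_of_mem _ h)
        have hS' : S' = insert v S := Finset.ext fun u => by
          rw [hS'mem u, Finset.mem_insert]
        refine IH t' S' ?_ ?_ ?_
        · rw [hS', Finset.coe_insert]
          intro z hz w hw hzw
          rcases hz with rfl | hz
          · rcases hw with rfl | hw
            · rfl
            · exact absurd (hzw ▸ Finset.mem_image_of_mem Sigma.fst hw) hvim
          · rcases hw with rfl | hw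
            · exact absurd (hzw ▸ Finset.mem_image_of_mem Sigma.fst hz) hvim
            · exact hS z hz w hw hzw
        · rw [hS', Finset.card_insert_of_notMem hvS]; omega
        · rw [hS', Finset.card_insert_of_notMem hvS]; omega
      cases t
      · simp only [Bool.false_eq_true, if_false]
        exact inf'_eq_of hne fun v hv => key _ v hv _ (fun u => by simp [Finset.mem_insert])
      · simp only [if_true]
        exact sup'_eq_of hne fun v hv => key _ v hv _ (fun u => by simp [Finset.mem_insert])
    · rw [dif_neg hne]
      -- every part is used
      have hall : ∀ i : Fin a, i ∈ S.image Sigma.fst := by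
        intro i
        by_contra hi
        exact hne ⟨vtx0 hc hcb i, (trans_playable hc hcb hba hS h2).mpr hi⟩
      have : (Finset.univ : Finset (Fin a)) ⊆ S.image Sigma.fst := fun i _ => hall i
      have h2' := Finset.card_le_card this
      rw [Finset.card_univ, Fintype.card_fin, card_image_fst hS] at h2'
      omega

end GameVal2
end Stmt7
namespace Stmt7
section GameVal3

variable {a b c : ℕ} (hc : 2 ≤ c) (hcb : c ≤ b) (hba : b ≤ a)

include hc hcb hba in
/-- With one vertex selected and Blocker to move, Blocker plays a second vertex in
the same part, locking the final size to that part's size. -/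
lemma singleton_val (v : Vtx a b c) (fuel : ℕ) (h1 : 1 ≤ fuel) (hf : a ≤ fuel + 1) :
    gameValAux (Gr a b c) fuel false {v} = sz b c v.1.val := by
  obtain ⟨f, rfl⟩ : ∃ f, fuel = f + 1 := ⟨fuel - 1, by omega⟩
  simp only [gameValAux]
  have hGPpair : ∀ w : Vtx a b c, w ≠ v →
      w ∈ playable (Gr a b c) ({v} : Finset (Vtx a b c)) := by
    intro w hw
    rw [mem_playable hc hcb hba]
    refine ⟨by simp [hw], ?_⟩
    by_cases hp : w.1 = v.1
    · refine Or.inr ?_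
      intro z hz y hy
      simp only [Finset.coe_singleton, Set.mem_insert_iff, Set.mem_singleton_iff] at hz hy
      rcases hz with rfl | rfl <;> rcases hy with rfl | rfl <;> simp [hp]
    · refine Or.inl ?_
      intro z hz y hy hzy
      simp only [Finset.coe_singleton, Set.mem_insert_iff, Set.mem_singleton_iff] at hz hy
      rcases hz with rfl | rfl <;> rcases hy with rfl | rfl
      · rfl
      · exact absurd hzy hp
      · exact absurd hzy.symm hp
      · rfl
  -- a same-part partner for v
  have : Nontrivial (Fin (sz b c v.1.val)) :=
    Fin.nontrivial_iff_two_le.mpr (two_le_sz hc hcb _)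
  obtain ⟨j, hj⟩ := exists_ne v.2
  have hw₀v : (⟨v.1, j⟩ : Vtx a b c) ≠ v := by
    intro e
    refine hj ?_
    have := (Sigma.mk.inj_iff.mp (e.trans (Sigma.eta v).symm)).2
    exact eq_of_heq this
  have hne : (playable (Gr a b c) ({v} : Finset (Vtx a b c))).Nonempty :=
    ⟨⟨v.1, j⟩, hGPpair _ hw₀v⟩
  rw [dif_pos hne]
  simp only [Bool.false_eq_true, if_false]
  refine le_antisymm (le_trans (Finset.inf'_le _ (hGPpair _ hw₀v)) (le_of_eq ?_))
    (Finset.le_inf' _ _ fun w hw => ?_)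
  · -- value of {⟨v.1,j⟩, v} is sz v.1
    refine mono_val hc hcb hba f _ _ v.1 ?_
      (Finset.one_lt_card.mpr ⟨_, by simp, v, by simp, hw₀v⟩) ?_
    · intro u hu
      simp only [Finset.mem_insert, Finset.mem_singleton] at hu
      rcases hu with rfl | rfl
      · rfl
      · rfl
    · exact le_trans (by have := sz_le_b hcb (v.1 : ℕ); omega)
        (Nat.add_le_add_right (Finset.one_lt_card.mpr ⟨_, by simp, v, by simp, hw₀v⟩) f)
  · -- every Blocker option is worth ≥ sz v.1
    have hwv : w ∉ ({v} : Finset (Vtx a b c)) := ((mem_playable hc hcb hba).mp hw).1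
    rw [Finset.mem_singleton] at hwv
    by_cases hp : w.1 = v.1
    · refine le_of_eq (Eq.symm ?_)
      refine mono_val hc hcb hba f _ _ v.1 ?_
        (Finset.one_lt_card.mpr ⟨w, by simp, v, by simp, hwv⟩) ?_
      · intro u hu
        simp only [Finset.mem_insert, Finset.mem_singleton] at hu
        rcases hu with rfl | rfl
        · exact hp
        · rfl
      · exact le_trans (by have := sz_le_b hcb (v.1 : ℕ); omega)
          (Nat.add_le_add_right (Finset.one_lt_card.mpr ⟨w, by simp, v, by simp, hwv⟩) f)
    · refine le_trans (show sz b c (v.1 : ℕ) ≤ a by have := sz_le_b hcb (v.1 : ℕ); omega)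
        (le_of_eq (Eq.symm ?_))
      refine trans_val hc hcb hba f _ _ ?_
        (Finset.one_lt_card.mpr ⟨w, by simp, v, by simp, hwv⟩) ?_
      · intro z hz y hy hzy
        simp only [Finset.coe_insert, Finset.coe_singleton, Set.mem_insert_iff,
          Set.mem_singleton_iff] at hz hy
        rcases hz with rfl | rfl <;> rcases hy with rfl | rfl
        · rfl
        · exact absurd hzy hp
        · exact absurd hzy.symm hp
        · rfl
      · exact le_trans (by omega)
          (Nat.add_le_add_right (Finset.one_lt_card.mpr ⟨w, by simp, v, by simp, hwv⟩) f)

include hc hcb in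
lemma a_le_cardV : a ≤ Fintype.card (Vtx a b c) := by
  classical
  rw [Fintype.card_sigma]
  calc a = ∑ _i : Fin a, 1 := by simp
    _ ≤ ∑ i : Fin a, Fintype.card (Fin (sz b c i.val)) := by
        refine Finset.sum_le_sum fun i _ => ?_
        rw [Fintype.card_fin]; exact sz_pos hc hcb (i.val : ℕ)
    _ = _ := rfl

include hc hcb hba in
lemma gpg_eq : gpg (Gr a b c) = b := by
  have haN := a_le_cardV (a := a) hc hcb
  have ha2 := two_le_a hc hcb hba
  unfold gpg gameVal
  rw [Finset.card_empty, Nat.sub_zero]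
  obtain ⟨f, hf⟩ : ∃ f, Fintype.card (Vtx a b c) = f + 1 :=
    ⟨Fintype.card (Vtx a b c) - 1, by omega⟩
  rw [hf]
  simp only [gameValAux]
  have hplay : ∀ v : Vtx a b c, v ∈ playable (Gr a b c) (∅ : Finset (Vtx a b c)) := by
    intro v
    rw [mem_playable hc hcb hba]
    refine ⟨by simp, Or.inr ?_⟩
    intro z hz y hy
    simp only [Finset.coe_empty, Set.mem_insert_iff, Set.mem_empty_iff_false, or_false] at hz hy
    rw [hz, hy]
  have hne : (playable (Gr a b c) (∅ : Finset (Vtx a b c))).Nonempty :=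
    ⟨vtx0 hc hcb ⟨0, by omega⟩, hplay _⟩
  rw [dif_pos hne]
  simp only [if_true, insert_empty_eq, Bool.not_true]
  refine le_antisymm (Finset.sup'_le _ _ fun v _ => ?_)
    (le_trans (le_of_eq ?_) (Finset.le_sup' _ (hplay (vtx0 hc hcb ⟨0, by omega⟩))))
  · rw [singleton_val hc hcb hba v f (by omega) (by omega)]
    exact sz_le_b hcb _
  · rw [singleton_val hc hcb hba _ f (by omega) (by omega)]
    simp [vtx0, sz]

end GameVal3
end Stmt7
namespace Stmt7
section Numbers

variable {a b c : ℕ} (hc : 2 ≤ c) (hcb : c ≤ b) (hba : b ≤ a)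

include hc hcb hba in
lemma card_le_a_of_gp {S : Finset (Vtx a b c)} (h : IsGPSet (Gr a b c) ↑S) : S.card ≤ a := by
  classical
  rcases (gp_iff hc hcb hba _).mp h with hT | hM
  · rw [← card_image_fst hT]
    have := Finset.card_le_univ (S.image Sigma.fst)
    simpa using this
  · rcases Finset.eq_empty_or_nonempty S with rfl | ⟨u, hu⟩
    · simp
    · have hsub : S ⊆ partF a b c u.1 := fun v hv => mem_partF.mpr (hM v hv u hu)
      have := Finset.card_le_card hsub
      rw [card_partF] at this
      have := sz_le_b hcb (u.1 : ℕ)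
      omega

include hc hcb in
lemma vtx0_injective : Function.Injective (vtx0 hc hcb (a := a)) := by
  intro i j h
  exact congrArg Sigma.fst h

include hc hcb hba in
lemma gpNum_eq : gpNum (Gr a b c) = a := by
  classical
  have hmem : a ∈ {n | ∃ S : Finset (Vtx a b c), IsGPSet (Gr a b c) ↑S ∧ S.card = n} := by
    refine ⟨Finset.univ.image (fun i => vtx0 hc hcb i), ?_, ?_⟩
    · rw [gp_iff hc hcb hba]
      refine Or.inl ?_
      intro u hu v hv huv
      simp only [Finset.coe_image, Finset.coe_univ, Set.image_univ, Set.mem_range] at hu hv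
      obtain ⟨i, rfl⟩ := hu
      obtain ⟨j, rfl⟩ := hv
      exact congrArg _ (huv : i = j)
    · rw [Finset.card_image_of_injective _ (vtx0_injective hc hcb), Finset.card_univ,
        Fintype.card_fin]
  refine le_antisymm (csSup_le ⟨a, hmem⟩ ?_) (le_csSup ⟨a, ?_⟩ hmem)
  · rintro n ⟨S, hS, rfl⟩
    exact card_le_a_of_gp hc hcb hba hS
  · rintro n ⟨S, hS, rfl⟩
    exact card_le_a_of_gp hc hcb hba hS

include hc hcb hba in
lemma gpLower_eq : gpLower (Gr a b c) = c := by
  classical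
  have ha2 : 2 ≤ a := two_le_a hc hcb hba
  set i1 : Fin a := ⟨1, by omega⟩ with hi1
  have hsz1 : sz b c (i1 : ℕ) = c := by simp [hi1, sz]
  have hmem : c ∈ {n | ∃ S : Finset (Vtx a b c), IsMaximalGPSet (Gr a b c) ↑S ∧ S.card = n} := by
    refine ⟨partF a b c i1, ⟨?_, ?_⟩, by rw [card_partF, hsz1]⟩
    · rw [gp_iff hc hcb hba]
      exact Or.inr fun u hu v hv => (mem_partF.mp hu).trans (mem_partF.mp hv).symm
    · intro v hv hgp
      have hvi : v.1 ≠ i1 := fun h => hv (Finset.mem_coe.mpr (mem_partF.mpr h))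
      have hx : (⟨i1, ⟨0, by rw [hsz1]; omega⟩⟩ : Vtx a b c) ∈ (partF a b c i1 : Set (Vtx a b c)) := by
        simp [mem_partF]
      have hy : (⟨i1, ⟨1, by rw [hsz1]; omega⟩⟩ : Vtx a b c) ∈ (partF a b c i1 : Set (Vtx a b c)) := by
        simp [mem_partF]
      rcases (gp_iff hc hcb hba _).mp hgp with hT | hM
      · have := hT _ (Set.mem_insert_of_mem _ hx) _ (Set.mem_insert_of_mem _ hy) rfl
        have h01 : (⟨0, by rw [hsz1]; omega⟩ : Fin (sz b c (i1 : ℕ))) = ⟨1, by rw [hsz1]; omega⟩ :=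
          eq_of_heq (Sigma.mk.inj_iff.mp this).2
        simp at h01
      · exact hvi (hM v (Set.mem_insert _ _) _ (Set.mem_insert_of_mem _ hx))
  have hlb : ∀ n ∈ {n | ∃ S : Finset (Vtx a b c), IsMaximalGPSet (Gr a b c) ↑S ∧ S.card = n},
      c ≤ n := by
    rintro n ⟨S, ⟨hGP, hmax⟩, rfl⟩
    rcases (gp_iff hc hcb hba _).mp hGP with hT | hM
    · -- transversal: must use all parts
      have himg : ∀ i : Fin a, i ∈ S.image Sigma.fst := by
        intro i
        by_contra hi
        have hvS : vtx0 hc hcb i ∉ (↑S : Set (Vtx a b c)) := by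
          intro h
          exact hi (Finset.mem_image_of_mem Sigma.fst (Finset.mem_coe.mp h))
        refine hmax _ hvS ?_
        rw [gp_iff hc hcb hba]
        refine Or.inl ?_
        intro z hz w hw hzw
        rcases hz with rfl | hz
        · rcases hw with rfl | hw
          · rfl
          · refine absurd ?_ hi
            rw [show i = w.1 from hzw]
            exact Finset.mem_image_of_mem Sigma.fst hw
        · rcases hw with rfl | hw
          · refine absurd ?_ hi
            rw [show i = z.1 from hzw.symm]
            exact Finset.mem_image_of_mem Sigma.fst hz
          · exact hT z hz w hw hzw
      have : (Finset.univ : Finset (Fin a)) ⊆ S.image Sigma.fst := fun i _ => himg i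
      have h1 := Finset.card_le_card this
      rw [Finset.card_univ, Fintype.card_fin, card_image_fst hT] at h1
      omega
    · -- all in one part: must be a whole part
      rcases Finset.eq_empty_or_nonempty S with rfl | ⟨u, hu⟩
      · exfalso
        refine hmax (vtx0 hc hcb ⟨0, by omega⟩) (by simp) ?_
        rw [gp_iff hc hcb hba]
        refine Or.inr ?_
        intro z hz w hw
        simp only [Finset.coe_empty, Set.mem_insert_iff, Set.mem_empty_iff_false,
          or_false] at hz hw
        rw [hz, hw]
      · have hsub : partF a b c u.1 ⊆ S := by
          intro v hv
          by_contra hvS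
          refine hmax v (fun h => hvS (Finset.mem_coe.mp h)) ?_
          rw [gp_iff hc hcb hba]
          refine Or.inr ?_
          intro z hz w hw
          have key : ∀ x : Vtx a b c, x ∈ insert v (↑S : Set (Vtx a b c)) → x.1 = u.1 := by
            intro x hx
            rcases hx with rfl | hx
            · exact mem_partF.mp hv
            · exact hM x hx u hu
          rw [key z hz, key w hw]
        have h1 := Finset.card_le_card hsub
        rw [card_partF] at h1
        have : c ≤ sz b c (u.1 : ℕ) := by unfold sz; split <;> omega
        omega
  exact le_antisymm (Nat.sInf_le hmem) (le_csInf ⟨c, hmem⟩ hlb)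

end Numbers
end Stmt7
/-- For any `2 ≤ c ≤ b ≤ a` there is a connected graph `G` with `gp(G) = a`,
`gpg(G) = b` and `gp⁻(G) = c`. -/

theorem stmt_7 (a b c : ℕ) (hc : 2 ≤ c) (hcb : c ≤ b) (hba : b ≤ a) :
    ∃ (V : Type) (_ : Fintype V) (G : SimpleGraph V),
      G.Connected ∧ gpNum G = a ∧ gpg G = b ∧ gpLower G = c := by
  exact ⟨Stmt7.Vtx a b c, inferInstance, Stmt7.Gr a b c,
    Stmt7.gr_connected hc hcb hba,
    Stmt7.gpNum_eq hc hcb hba,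
    Stmt7.gpg_eq hc hcb hba,
    Stmt7.gpLower_eq hc hcb hba⟩
end

section
/- For every n ≥ 4, the Kneser graph K(n,2) satisfies gpg(K(n,2)) = 6 and gpg'(K(n,2)) = 6. -/
open Finset SimpleGraph

variable {V : Type*}

/-- The Kneser graph `K(n,2)`: vertices are the 2-element subsets of `{1, …, n}`,
adjacent iff disjoint. -/
def kneser2 (n : ℕ) : SimpleGraph {s : Finset (Fin n) // s.card = 2} where
  Adj a b := Disjoint a.1 b.1
  symm := ⟨fun _ _ h => h.symm⟩
  loopless := ⟨by
    rintro ⟨s, hs⟩ h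
    change Disjoint s s at h
    rw [disjoint_self] at h
    rw [show s = ⊥ from h] at hs
    simp at hs⟩

open Finset SimpleGraph

namespace KneserGame


abbrev KV (n : ℕ) := {s : Finset (Fin n) // s.card = 2}

variable {n : ℕ}

def NoCherry (S : Set (KV n)) : Prop :=
  ∀ u ∈ S, ∀ v ∈ S, ∀ w ∈ S,
    u ≠ v → ¬ Disjoint u.1 v.1 → Disjoint w.1 u.1 → Disjoint w.1 v.1 → False

lemma adj_iff {a b : KV n} : (kneser2 n).Adj a b ↔ Disjoint a.1 b.1 := Iff.rfl

lemma nonempty_val (a : KV n) : a.1.Nonempty := by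
  rw [← Finset.card_pos, a.2]; norm_num

lemma not_disjoint_self (a : KV n) : ¬ Disjoint a.1 a.1 := by
  rw [disjoint_self]
  intro h
  rw [Finset.bot_eq_empty] at h
  have := nonempty_val a
  rw [h] at this
  simp at this

lemma ne_of_disjoint {a b : KV n} (h : Disjoint a.1 b.1) : a ≠ b := by
  rintro rfl
  exact not_disjoint_self a h

lemma card_union_of_not_disjoint {a b : KV n} (hne : a ≠ b) (h : ¬ Disjoint a.1 b.1) :
    (a.1 ∪ b.1).card = 3 := by
  have h1 : (a.1 ∩ b.1).Nonempty := Finset.not_disjoint_iff_nonempty_inter.mp h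
  have h2 : (a.1 ∩ b.1).card ≤ 1 := by
    by_contra hc
    push_neg at hc
    have hsub : a.1 ∩ b.1 ⊆ a.1 := Finset.inter_subset_left
    have : a.1 ∩ b.1 = a.1 := Finset.eq_of_subset_of_card_le hsub (by omega)
    have hab : a.1 ⊆ b.1 := by rw [← this]; exact Finset.inter_subset_right
    have : a.1 = b.1 := Finset.eq_of_subset_of_card_le hab (by rw [a.2, b.2])
    exact hne (Subtype.ext this)
  have h3 : 1 ≤ (a.1 ∩ b.1).card := Finset.card_pos.mpr h1
  have := Finset.card_union_add_card_inter a.1 b.1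
  rw [a.2, b.2] at this
  omega

/-- common neighbour for intersecting pairs, `n ≥ 5` -/
lemma exists_common_nbr (hn : 5 ≤ n) {u v : KV n} (hne : u ≠ v) (h : ¬ Disjoint u.1 v.1) :
    ∃ w : KV n, Disjoint w.1 u.1 ∧ Disjoint w.1 v.1 := by
  have hcu : (u.1 ∪ v.1).card = 3 := card_union_of_not_disjoint hne h
  have hcompl : 2 ≤ (Finset.univ \ (u.1 ∪ v.1)).card := by
    rw [Finset.card_sdiff_of_subset (Finset.subset_univ _), Finset.card_univ, Fintype.card_fin, hcu]
    omega
  obtain ⟨t, ht, htc⟩ := Finset.exists_subset_card_eq hcompl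
  refine ⟨⟨t, htc⟩, ?_, ?_⟩ <;>
  · rw [Finset.disjoint_left]
    intro x hx hx2
    have := ht hx
    simp only [Finset.mem_sdiff, Finset.mem_univ, true_and, Finset.mem_union] at this
    tauto

lemma dist_le_two (hn : 5 ≤ n) (u v : KV n) : (kneser2 n).dist u v ≤ 2 := by
  by_cases he : u = v
  · subst he; simp [SimpleGraph.dist_self]
  by_cases hd : Disjoint u.1 v.1
  · have : (kneser2 n).Adj u v := hd
    calc (kneser2 n).dist u v ≤ (this.toWalk).length := SimpleGraph.dist_le _
    _ ≤ 2 := by simp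
  · obtain ⟨w, hwu, hwv⟩ := exists_common_nbr hn he hd
    have := SimpleGraph.dist_le
      (SimpleGraph.Walk.cons (adj_iff.mpr hwu.symm) ((adj_iff.mpr hwv).toWalk))
    simpa using this

lemma dist_eq_two (hn : 5 ≤ n) {u v : KV n} (hne : u ≠ v) (h : ¬ Disjoint u.1 v.1) :
    (kneser2 n).dist u v = 2 := by
  obtain ⟨w, hwu, hwv⟩ := exists_common_nbr hn hne h
  have hr : (kneser2 n).Reachable u v :=
    ⟨SimpleGraph.Walk.cons (adj_iff.mpr hwu.symm) ((adj_iff.mpr hwv).toWalk)⟩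
  have h0 : 0 < (kneser2 n).dist u v := hr.pos_dist_of_ne hne
  have h1 : (kneser2 n).dist u v ≠ 1 := by
    intro hc
    exact h (SimpleGraph.dist_eq_one_iff_adj.mp hc)
  have h2 := dist_le_two hn u v
  omega

end KneserGame
namespace KneserGame
variable {n : ℕ}

lemma ncard_le_two_of_subset_pair {X : Set (KV n)} {a b : KV n} (h : X ⊆ {a, b}) :
    X.ncard ≤ 2 := by
  calc X.ncard ≤ ({a, b} : Set (KV n)).ncard := Set.ncard_le_ncard h (Set.toFinite _)
  _ ≤ ({b} : Set (KV n)).ncard + 1 := Set.ncard_insert_le _ _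
  _ ≤ 2 := by simp

lemma gp_to_nc (hn : 5 ≤ n) {S : Set (KV n)} (h : IsGPSet (kneser2 n) S) : NoCherry S := by
  intro u hu v hv w hw hne hnd hwu hwv
  have hadj1 : (kneser2 n).Adj u w := adj_iff.mpr hwu.symm
  have hadj2 : (kneser2 n).Adj w v := adj_iff.mpr hwv
  set p : (kneser2 n).Walk u v := SimpleGraph.Walk.cons hadj1 hadj2.toWalk with hp
  have hsup : p.support = [u, w, v] := by simp [hp]
  have hpath : p.IsPath := by
    rw [SimpleGraph.Walk.isPath_def, hsup]
    have h1 : u ≠ w := ne_of_disjoint hwu.symm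
    have h2 : w ≠ v := ne_of_disjoint hwv
    simp [h1, h2, hne]
  have hlen : p.length = (kneser2 n).dist u v := by
    rw [dist_eq_two hn hne hnd]; simp [hp]
  have hcard := h p hpath hlen
  have hsub : ({u, w, v} : Set (KV n)) ⊆ S ∩ {x | x ∈ p.support} := by
    intro x hx
    rw [hsup]
    rcases hx with rfl | rfl | rfl <;> exact ⟨by assumption, by simp⟩
  have h3 : ({u, w, v} : Set (KV n)).ncard = 3 := by
    have h1 : u ≠ w := ne_of_disjoint hwu.symm
    have h2 : w ≠ v := ne_of_disjoint hwv
    rw [Set.ncard_insert_of_notMem (by simp [h1, hne]) (Set.toFinite _),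
      Set.ncard_insert_of_notMem (by simp [h2]) (Set.toFinite _), Set.ncard_singleton]
  have h4 := Set.ncard_le_ncard hsub (Set.toFinite _)
  rw [h3] at h4
  have : (3:ℕ) ≤ 2 := le_trans h4 hcard
  omega

lemma nc_to_gp (hn : 5 ≤ n) {S : Set (KV n)} (h : NoCherry S) : IsGPSet (kneser2 n) S := by
  intro u v p hpath hlen
  have hd2 : (kneser2 n).dist u v ≤ 2 := dist_le_two hn u v
  cases p with
  | nil =>
      apply le_trans (Set.ncard_le_ncard (s := S ∩ _) (t := {u}) (by
        intro x hx
        simp only [SimpleGraph.Walk.support_nil, List.mem_singleton, Set.mem_inter_iff,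
          Set.mem_setOf_eq] at hx
        simp [hx.2]) (Set.toFinite _))
      simp
  | cons h1 q =>
    rename_i w
    cases q with
    | nil =>
        apply ncard_le_two_of_subset_pair (a := u) (b := v)
        intro x hx
        simp only [SimpleGraph.Walk.support_cons, SimpleGraph.Walk.support_nil,
          Set.mem_inter_iff, Set.mem_setOf_eq, List.mem_cons, List.mem_singleton] at hx
        rcases hx.2 with rfl | rfl | hc
        · simp
        · simp
        · simp at hc
    | cons h2 r =>
      rename_i x
      cases r with
      | nil =>
          -- the length-2 geodesic case
          have hdist : (kneser2 n).dist u v = 2 := by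
            rw [← hlen]; simp
          have hne : u ≠ v := by
            rintro rfl
            rw [SimpleGraph.dist_self] at hdist
            omega
          have hnd : ¬ Disjoint u.1 v.1 := by
            intro hd
            have : (kneser2 n).dist u v = 1 :=
              SimpleGraph.dist_eq_one_iff_adj.mpr (adj_iff.mpr hd)
            omega
          have hwu : Disjoint w.1 u.1 := (adj_iff.mp h1).symm
          have hwv : Disjoint w.1 v.1 := adj_iff.mp h2
          have hsub : S ∩ {y | y ∈ (SimpleGraph.Walk.cons h1
              (SimpleGraph.Walk.cons h2 SimpleGraph.Walk.nil)).support} ⊆ {u, w, v} := by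
            intro y hy
            simp only [SimpleGraph.Walk.support_cons, SimpleGraph.Walk.support_nil,
              Set.mem_inter_iff, Set.mem_setOf_eq, List.mem_cons, List.mem_singleton] at hy
            rcases hy.2 with rfl | rfl | rfl | hc
            · simp
            · simp
            · simp
            · simp at hc
          by_cases hu : u ∈ S
          · by_cases hw : w ∈ S
            · by_cases hv : v ∈ S
              · exact absurd (h u hu v hv w hw hne hnd hwu hwv) (by simp)
              · exact ncard_le_two_of_subset_pair (a := u) (b := w) (by
                  intro y hy
                  rcases hsub hy with rfl | rfl | rfl
                  · simp
                  · simp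
                  · exact absurd hy.1 hv)
            · exact ncard_le_two_of_subset_pair (a := u) (b := v) (by
                intro y hy
                rcases hsub hy with rfl | rfl | rfl
                · simp
                · exact absurd hy.1 hw
                · simp)
          · exact ncard_le_two_of_subset_pair (a := w) (b := v) (by
              intro y hy
              rcases hsub hy with rfl | rfl | rfl
              · exact absurd hy.1 hu
              · simp
              · simp)
      | cons h3 r' =>
          exfalso
          have : (SimpleGraph.Walk.cons h1 (SimpleGraph.Walk.cons h2
              (SimpleGraph.Walk.cons h3 r'))).length = r'.length + 3 := by simp
          omega

end KneserGame
namespace KneserGame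
variable {n : ℕ}

@[simp] lemma insert_irrel (v : KV n) (S : Finset (KV n)) :
    (@insert (KV n) (Finset (KV n))
      (@Finset.instInsert (KV n) (fun a b => Classical.propDecidable (a = b))) v S)
      = insert v S := by
  congr!

lemma mem_playable {S : Finset (KV n)} {v : KV n} :
    v ∈ playable (kneser2 n) S ↔ v ∉ S ∧ IsGPSet (kneser2 n) (↑(insert v S) : Set (KV n)) := by
  classical
  simp [playable]

lemma nc_of_subset_K4 {S : Set (KV n)} {A : Finset (Fin n)} (hA : A.card = 4)
    (hS : ∀ e ∈ S, e.1 ⊆ A) : NoCherry S := by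
  intro u hu v hv w hw hne hnd hwu hwv
  have hcu : (u.1 ∪ v.1).card = 3 := card_union_of_not_disjoint hne hnd
  have huv : u.1 ∪ v.1 ⊆ A := Finset.union_subset (hS u hu) (hS v hv)
  have hw1 : w.1 ⊆ A \ (u.1 ∪ v.1) := by
    intro x hx
    rw [Finset.mem_sdiff, Finset.mem_union]
    refine ⟨hS w hw hx, ?_⟩
    rintro (h1 | h1)
    · exact Finset.disjoint_left.mp hwu hx h1
    · exact Finset.disjoint_left.mp hwv hx h1
  have := Finset.card_le_card hw1
  rw [Finset.card_sdiff_of_subset huv, hA, hcu, w.2] at this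
  omega

lemma card_edgesIn {A : Finset (Fin n)} (hA : A.card = 4) :
    (Finset.univ.filter (fun v : KV n => v.1 ⊆ A)).card = 6 := by
  classical
  have : (Finset.univ.filter (fun v : KV n => v.1 ⊆ A)).card = (A.powersetCard 2).card := by
    apply Finset.card_bij (fun v _ => v.1)
    · intro v hv
      rw [Finset.mem_powersetCard]
      exact ⟨(Finset.mem_filter.mp hv).2, v.2⟩
    · intro a _ b _ hab
      exact Subtype.ext hab
    · intro s hs
      rw [Finset.mem_powersetCard] at hs
      exact ⟨⟨s, hs.2⟩, Finset.mem_filter.mpr ⟨Finset.mem_univ _, hs.1⟩, rfl⟩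
  rw [this, Finset.card_powersetCard, hA]
  decide

lemma fill (P : Finset (KV n) → Prop) (E : Finset (KV n))
    (hsub : ∀ S, P S → S ⊆ E)
    (hplay : ∀ S, P S → playable (kneser2 n) S = E \ S)
    (hstep : ∀ S, P S → ∀ h ∈ E \ S, P (insert h S)) :
    ∀ (fuel : ℕ) (S : Finset (KV n)) (turn : Bool), P S → E.card ≤ fuel + S.card →
      gameValAux (kneser2 n) fuel turn S = E.card := by
  intro fuel
  induction fuel with
  | zero =>
      intro S turn hP hc
      simp only [gameValAux]
      exact le_antisymm (Finset.card_le_card (hsub S hP)) (by simpa using hc)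
  | succ f ih =>
      intro S turn hP hc
      by_cases hne : (playable (kneser2 n) S).Nonempty
      · have hall : ∀ v ∈ playable (kneser2 n) S,
            gameValAux (kneser2 n) f (!turn) (insert v S) = E.card := by
          intro v hv
          rw [hplay S hP] at hv
          have hvS : v ∉ S := (Finset.mem_sdiff.mp hv).2
          exact ih (insert v S) (!turn) (hstep S hP v hv)
            (by rw [Finset.card_insert_of_notMem hvS]; omega)
        have hall' : ∀ v ∈ playable (kneser2 n) S,
            gameValAux (kneser2 n) f (!turn)
              (@insert (KV n) (Finset (KV n))
                (@Finset.instInsert (KV n) (fun a b => Classical.propDecidable (a = b))) v S)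
              = E.card := by
          intro v hv
          rw [insert_irrel]
          exact hall v hv
        obtain ⟨c, hcmem⟩ := hne
        rw [gameValAux, dif_pos ⟨c, hcmem⟩]
        set F : KV n → ℕ := fun v => gameValAux (kneser2 n) f (!turn)
          (@insert (KV n) (Finset (KV n))
            (@Finset.instInsert (KV n) (fun a b => Classical.propDecidable (a = b))) v S)
          with hF
        have hallF : ∀ v ∈ playable (kneser2 n) S, F v = E.card := fun v hv => hall' v hv
        cases turn with
        | true =>
            simp only [if_true]
            refine le_antisymm (Finset.sup'_le _ _ fun v hv => (hallF v hv).le) ?_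
            calc E.card = F c := (hallF c hcmem).symm
            _ ≤ _ := Finset.le_sup' F hcmem
        | false =>
            simp only [Bool.false_eq_true, if_false]
            refine le_antisymm ?_ (Finset.le_inf' _ _ fun v hv => (hallF v hv).ge)
            calc _ ≤ F c := Finset.inf'_le F hcmem
            _ = E.card := hallF c hcmem
      · rw [gameValAux, dif_neg hne]
        have h0 : E \ S = ∅ := by
          rw [← hplay S hP]
          simpa [Finset.not_nonempty_iff_eq_empty] using hne
        have hES : E ⊆ S := Finset.sdiff_eq_empty_iff_subset.mp h0
        rw [Finset.Subset.antisymm (hsub S hP) hES]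

end KneserGame
namespace KneserGame
variable {n : ℕ}

def MixedP (p q : KV n) (S : Finset (KV n)) : Prop :=
  NoCherry (↑S : Set (KV n)) ∧ p ∈ S ∧ q ∈ S ∧
    ∃ u0 ∈ S, ∃ v0 ∈ S, u0 ≠ v0 ∧ ¬ Disjoint u0.1 v0.1

lemma other_elt {e : KV n} {x : Fin n} (hx : x ∈ e.1) :
    ∃ y : Fin n, y ≠ x ∧ e.1 = {x, y} := by
  have h2 := e.2
  obtain ⟨a, b, hab, hE⟩ := Finset.card_eq_two.mp h2
  rw [hE] at hx
  rcases Finset.mem_insert.mp hx with rfl | hx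
  · exact ⟨b, hab.symm, hE⟩
  · rw [Finset.mem_singleton] at hx
    subst hx
    exact ⟨a, hab, by rw [hE, Finset.pair_comm]⟩

lemma mixed_subset_K4 {p q : KV n} (hpq : Disjoint p.1 q.1) {S : Finset (KV n)}
    (h : MixedP p q S) : ∀ e ∈ S, e.1 ⊆ p.1 ∪ q.1 := by
  obtain ⟨hnc, hp, hq, u0, hu0, v0, hv0, hne0, hnd0⟩ := h
  intro e he
  by_contra hsub
  obtain ⟨x, hxe, hxpq⟩ := Finset.not_subset.mp hsub
  obtain ⟨y, hyx, hexy⟩ := other_elt hxe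
  rw [Finset.mem_union] at hxpq
  push_neg at hxpq
  by_cases hyp : y ∈ p.1
  · -- e meets p, disjoint from q : cherry (e, p, q)
    have hnep : e ≠ p := by
      rintro rfl
      exact hxpq.1 hxe
    have hndep : ¬ Disjoint e.1 p.1 := by
      rw [Finset.not_disjoint_iff]
      exact ⟨y, by rw [hexy]; simp, hyp⟩
    have hdq : Disjoint q.1 e.1 := by
      rw [Finset.disjoint_right, hexy]
      intro a ha
      rcases Finset.mem_insert.mp ha with rfl | ha
      · exact hxpq.2
      · rw [Finset.mem_singleton] at ha
        subst ha
        exact fun hc => Finset.disjoint_left.mp hpq hyp hc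
    exact hnc e he p hp q hq hnep hndep hdq hpq.symm
  · by_cases hyq : y ∈ q.1
    · have hneq : e ≠ q := by
        rintro rfl
        exact hxpq.2 hxe
      have hndeq : ¬ Disjoint e.1 q.1 := by
        rw [Finset.not_disjoint_iff]
        exact ⟨y, by rw [hexy]; simp, hyq⟩
      have hdp : Disjoint p.1 e.1 := by
        rw [Finset.disjoint_right, hexy]
        intro a ha
        rcases Finset.mem_insert.mp ha with rfl | ha
        · exact hxpq.1
        · rw [Finset.mem_singleton] at ha
          subst ha
          exact fun hc => Finset.disjoint_right.mp hpq hyq hc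
      exact hnc e he q hq p hp hneq hndeq hdp hpq
    · -- e disjoint from both p and q
      have hdep : Disjoint e.1 p.1 := by
        rw [Finset.disjoint_left, hexy]
        intro a ha
        rcases Finset.mem_insert.mp ha with rfl | ha
        · exact hxpq.1
        · rw [Finset.mem_singleton] at ha; subst ha; exact hyp
      have hdeq : Disjoint e.1 q.1 := by
        rw [Finset.disjoint_left, hexy]
        intro a ha
        rcases Finset.mem_insert.mp ha with rfl | ha
        · exact hxpq.2
        · rw [Finset.mem_singleton] at ha; subst ha; exact hyq
      -- find w ∈ S intersecting e, w ≠ e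
      have hw : ∃ w ∈ S, w ≠ e ∧ ¬ Disjoint w.1 e.1 := by
        by_cases heu : e = u0
        · exact ⟨v0, hv0, by rintro rfl; exact hne0 heu.symm, by
            subst heu; rwa [disjoint_comm] at hnd0⟩
        · by_cases hev : e = v0
          · exact ⟨u0, hu0, by rintro rfl; exact hne0 hev, by subst hev; exact hnd0⟩
          · by_contra hcon
            push_neg at hcon
            have h1 : Disjoint e.1 u0.1 := by
              have := hcon u0 hu0 (fun hc => heu hc.symm)
              rwa [disjoint_comm] at this
            have h2 : Disjoint e.1 v0.1 := by
              have := hcon v0 hv0 (fun hc => hev hc.symm)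
              rwa [disjoint_comm] at this
            exact hnc u0 hu0 v0 hv0 e he hne0 hnd0 h1 h2
      obtain ⟨w, hwS, hwne, hwnd⟩ := hw
      -- w meets both p and q
      have hwp : ¬ Disjoint p.1 w.1 := fun hd =>
        hnc e he w hwS p hp hwne.symm (by rwa [disjoint_comm] at hwnd) hdep.symm hd
      have hwq : ¬ Disjoint q.1 w.1 := fun hd =>
        hnc e he w hwS q hq hwne.symm (by rwa [disjoint_comm] at hwnd) hdeq.symm hd
      -- hence w ⊆ p ∪ q, contradicting that w meets e
      have hwsub : w.1 ⊆ p.1 ∪ q.1 := by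
        have hint : w.1 ∩ (p.1 ∪ q.1) = w.1 := by
          apply Finset.eq_of_subset_of_card_le Finset.inter_subset_left
          have : (w.1 ∩ p.1) ∪ (w.1 ∩ q.1) ⊆ w.1 ∩ (p.1 ∪ q.1) := by
            intro a ha
            rw [Finset.mem_union, Finset.mem_inter, Finset.mem_inter] at ha
            rw [Finset.mem_inter, Finset.mem_union]
            tauto
          have hd12 : Disjoint (w.1 ∩ p.1) (w.1 ∩ q.1) :=
            (hpq.mono Finset.inter_subset_right Finset.inter_subset_right)
          have c1 : 1 ≤ (w.1 ∩ p.1).card := Finset.card_pos.mpr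
            (Finset.not_disjoint_iff_nonempty_inter.mp (fun hd => hwp hd.symm))
          have c2 : 1 ≤ (w.1 ∩ q.1).card := Finset.card_pos.mpr
            (Finset.not_disjoint_iff_nonempty_inter.mp (fun hd => hwq hd.symm))
          have := Finset.card_le_card this
          rw [Finset.card_union_of_disjoint hd12] at this
          rw [w.2]
          omega
        intro a ha
        rw [← hint] at ha
        exact (Finset.mem_inter.mp ha).2
      have : Disjoint e.1 w.1 :=
        Finset.disjoint_of_subset_right hwsub (Finset.disjoint_union_right.mpr ⟨hdep, hdeq⟩)
      exact hwnd this.symm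

end KneserGame
namespace KneserGame
variable {n : ℕ}

lemma card_pq {p q : KV n} (hpq : Disjoint p.1 q.1) : (p.1 ∪ q.1).card = 4 := by
  rw [Finset.card_union_of_disjoint hpq, p.2, q.2]

lemma mixed_val (hn : 5 ≤ n) {p q : KV n} (hpq : Disjoint p.1 q.1) :
    ∀ (fuel : ℕ) (S : Finset (KV n)) (turn : Bool), MixedP p q S → 6 ≤ fuel + S.card →
      gameValAux (kneser2 n) fuel turn S = 6 := by
  classical
  have hA : (p.1 ∪ q.1).card = 4 := card_pq hpq
  set E : Finset (KV n) := Finset.univ.filter (fun v : KV n => v.1 ⊆ p.1 ∪ q.1) with hE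
  have hEcard : E.card = 6 := card_edgesIn hA
  have hmemE : ∀ v : KV n, v ∈ E ↔ v.1 ⊆ p.1 ∪ q.1 := by
    intro v; simp [hE]
  have hsub : ∀ S, MixedP p q S → S ⊆ E := by
    intro S hP e he
    exact (hmemE e).mpr (mixed_subset_K4 hpq hP e he)
  have hncK4 : ∀ (S : Finset (KV n)), (∀ e ∈ S, e.1 ⊆ p.1 ∪ q.1) →
      NoCherry (↑S : Set (KV n)) := by
    intro S hS
    exact nc_of_subset_K4 hA (fun e he => hS e (Finset.mem_coe.mp he))
  have hplay : ∀ S, MixedP p q S → playable (kneser2 n) S = E \ S := by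
    intro S hP
    ext v
    rw [mem_playable, Finset.mem_sdiff]
    constructor
    · rintro ⟨hvS, hgp⟩
      have hnc : NoCherry (↑(insert v S) : Set (KV n)) := gp_to_nc hn hgp
      have hP' : MixedP p q (insert v S) := by
        obtain ⟨_, hp, hq, u0, hu0, v0, hv0, hne0, hnd0⟩ := hP
        exact ⟨hnc, Finset.mem_insert_of_mem hp, Finset.mem_insert_of_mem hq,
          u0, Finset.mem_insert_of_mem hu0, v0, Finset.mem_insert_of_mem hv0, hne0, hnd0⟩
      exact ⟨(hmemE v).mpr (mixed_subset_K4 hpq hP' v (Finset.mem_insert_self v S)), hvS⟩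
    · rintro ⟨hvE, hvS⟩
      refine ⟨hvS, nc_to_gp hn ?_⟩
      apply hncK4
      intro e he
      rcases Finset.mem_insert.mp he with rfl | he
      · exact (hmemE e).mp hvE
      · exact mixed_subset_K4 hpq hP e he
  have hstep : ∀ S, MixedP p q S → ∀ h ∈ E \ S, MixedP p q (insert h S) := by
    intro S hP h hh
    obtain ⟨hnc, hp, hq, u0, hu0, v0, hv0, hne0, hnd0⟩ := hP
    refine ⟨?_, Finset.mem_insert_of_mem hp, Finset.mem_insert_of_mem hq,
      u0, Finset.mem_insert_of_mem hu0, v0, Finset.mem_insert_of_mem hv0, hne0, hnd0⟩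
    apply hncK4
    intro e he
    rcases Finset.mem_insert.mp he with rfl | he
    · exact (hmemE e).mp (Finset.mem_sdiff.mp hh).1
    · exact mixed_subset_K4 hpq ⟨hnc, hp, hq, u0, hu0, v0, hv0, hne0, hnd0⟩ e he
  intro fuel S turn hP hc
  rw [fill (MixedP p q) E hsub hplay hstep fuel S turn hP (by omega), hEcard]
end KneserGame
namespace KneserGame
variable {n : ℕ}

/-- the sup'/inf' function occurring inside `gameValAux`, with the classical insert -/
noncomputable def GF (f : ℕ) (t : Bool) (S : Finset (KV n)) : KV n → ℕ := fun v =>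
  gameValAux (kneser2 n) f t
    (@insert (KV n) (Finset (KV n))
      (@Finset.instInsert (KV n) (fun a b => Classical.propDecidable (a = b))) v S)

lemma GF_eq (f : ℕ) (t : Bool) (S : Finset (KV n)) (v : KV n) :
    GF f t S v = gameValAux (kneser2 n) f t (insert v S) := by
  rw [GF, insert_irrel]

lemma val_true_succ (f : ℕ) (S : Finset (KV n)) (h : (playable (kneser2 n) S).Nonempty) :
    gameValAux (kneser2 n) (f+1) true S = (playable (kneser2 n) S).sup' h (GF f false S) := by
  rw [gameValAux, dif_pos h]
  simp only [if_true, Bool.not_true]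
  rfl

lemma val_false_succ (f : ℕ) (S : Finset (KV n)) (h : (playable (kneser2 n) S).Nonempty) :
    gameValAux (kneser2 n) (f+1) false S = (playable (kneser2 n) S).inf' h (GF f true S) := by
  rw [gameValAux, dif_pos h]
  simp only [Bool.false_eq_true, if_false, Bool.not_false]
  rfl

lemma sup_eq_six (f : ℕ) (S : Finset (KV n))
    (hub : ∀ v ∈ playable (kneser2 n) S, gameValAux (kneser2 n) f false (insert v S) ≤ 6)
    (w : KV n) (hw : w ∈ playable (kneser2 n) S)
    (hwv : gameValAux (kneser2 n) f false (insert w S) = 6) :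
    gameValAux (kneser2 n) (f+1) true S = 6 := by
  rw [val_true_succ f S ⟨w, hw⟩]
  refine le_antisymm (Finset.sup'_le _ _ fun v hv => ?_) ?_
  · rw [GF_eq]; exact hub v hv
  · calc (6:ℕ) = GF f false S w := by rw [GF_eq, hwv]
    _ ≤ _ := Finset.le_sup' _ hw

lemma inf_eq_six (f : ℕ) (S : Finset (KV n))
    (hlb : ∀ v ∈ playable (kneser2 n) S, 6 ≤ gameValAux (kneser2 n) f true (insert v S))
    (w : KV n) (hw : w ∈ playable (kneser2 n) S)
    (hwv : gameValAux (kneser2 n) f true (insert w S) = 6) :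
    gameValAux (kneser2 n) (f+1) false S = 6 := by
  rw [val_false_succ f S ⟨w, hw⟩]
  refine le_antisymm ?_ (Finset.le_inf' _ _ fun v hv => ?_)
  · calc _ ≤ GF f true S w := Finset.inf'_le _ hw
    _ = 6 := by rw [GF_eq, hwv]
  · rw [GF_eq]; exact hlb v hv

lemma sup_ge_six (f : ℕ) (S : Finset (KV n))
    (w : KV n) (hw : w ∈ playable (kneser2 n) S)
    (hwv : 6 ≤ gameValAux (kneser2 n) f false (insert w S)) :
    6 ≤ gameValAux (kneser2 n) (f+1) true S := by
  rw [val_true_succ f S ⟨w, hw⟩]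
  calc (6:ℕ) ≤ GF f false S w := by rw [GF_eq]; exact hwv
  _ ≤ _ := Finset.le_sup' _ hw

lemma inf_le_six (f : ℕ) (S : Finset (KV n))
    (w : KV n) (hw : w ∈ playable (kneser2 n) S)
    (hwv : gameValAux (kneser2 n) f true (insert w S) ≤ 6) :
    gameValAux (kneser2 n) (f+1) false S ≤ 6 := by
  rw [val_false_succ f S ⟨w, hw⟩]
  calc _ ≤ GF f true S w := Finset.inf'_le _ hw
  _ ≤ 6 := by rw [GF_eq]; exact hwv

lemma val_succ_const (f : ℕ) (S : Finset (KV n)) (turn : Bool)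
    (hne : (playable (kneser2 n) S).Nonempty)
    (hall : ∀ v ∈ playable (kneser2 n) S,
      gameValAux (kneser2 n) f (!turn) (insert v S) = 6) :
    gameValAux (kneser2 n) (f+1) turn S = 6 := by
  obtain ⟨w, hw⟩ := hne
  cases turn with
  | true => exact sup_eq_six f S (fun v hv => (hall v hv).le) w hw (hall w hw)
  | false => exact inf_eq_six f S (fun v hv => (hall v hv).ge) w hw (hall w hw)

end KneserGame
namespace KneserGame
variable {n : ℕ}

def pr (a b : Fin n) (h : a ≠ b) : KV n := ⟨{a, b}, Finset.card_pair h⟩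

@[simp] lemma pr_val (a b : Fin n) (h : a ≠ b) : (pr a b h).1 = {a, b} := rfl

lemma mem_pr {x a b : Fin n} {h : a ≠ b} : x ∈ (pr a b h).1 ↔ x = a ∨ x = b := by
  simp [pr]

lemma ne_of_mem_not_mem {u v : KV n} {x : Fin n} (hx : x ∈ u.1) (hx' : x ∉ v.1) : u ≠ v := by
  rintro rfl; exact hx' hx

lemma pr_disj {a b c d : Fin n} {h1 : a ≠ b} {h2 : c ≠ d}
    (hac : a ≠ c) (had : a ≠ d) (hbc : b ≠ c) (hbd : b ≠ d) :
    Disjoint (pr a b h1).1 (pr c d h2).1 := by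
  rw [Finset.disjoint_left]
  intro x hx hx2
  rw [mem_pr] at hx hx2
  rcases hx with rfl | rfl <;> rcases hx2 with rfl | rfl <;> simp_all

lemma pr_not_disj {a b c : Fin n} {h1 : a ≠ b} {h2 : a ≠ c} :
    ¬ Disjoint (pr a b h1).1 (pr a c h2).1 :=
  Finset.not_disjoint_iff.mpr ⟨a, by simp [mem_pr], by simp [mem_pr]⟩

lemma subset_triple_enum {v : KV n} {a b c : Fin n} (h : v.1 ⊆ {a, b, c}) :
    v.1 = {a, b} ∨ v.1 = {a, c} ∨ v.1 = {b, c} := by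
  obtain ⟨x, y, hxy, hv⟩ := Finset.card_eq_two.mp v.2
  have hx : x ∈ ({a, b, c} : Finset (Fin n)) := h (by rw [hv]; simp)
  have hy : y ∈ ({a, b, c} : Finset (Fin n)) := h (by rw [hv]; simp)
  simp only [Finset.mem_insert, Finset.mem_singleton] at hx hy
  rw [hv]
  rcases hx with rfl | rfl | rfl <;> rcases hy with rfl | rfl | rfl <;>
    first
      | exact absurd rfl hxy
      | exact Or.inl rfl
      | exact Or.inr (Or.inl rfl)
      | exact Or.inr (Or.inr rfl)
      | exact Or.inl (Finset.pair_comm _ _)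
      | exact Or.inr (Or.inl (Finset.pair_comm _ _))
      | exact Or.inr (Or.inr (Finset.pair_comm _ _))

lemma exists_fresh (hn : 5 ≤ n) (s : Finset (Fin n)) (hs : s.card ≤ 4) :
    ∃ d, d ∉ s := by
  by_contra h
  push_neg at h
  have hsub : (Finset.univ : Finset (Fin n)) ⊆ s := fun d _ => h d
  have := Finset.card_le_card hsub
  rw [Finset.card_univ, Fintype.card_fin] at this
  omega

lemma triangle_card {a b c : Fin n} (hab : a ≠ b) (hac : a ≠ c) (hbc : b ≠ c) :
    ({pr a b hab, pr a c hac, pr b c hbc} : Finset (KV n)).card = 3 := by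
  rw [Finset.card_insert_of_notMem, Finset.card_insert_of_notMem, Finset.card_singleton]
  · simp only [Finset.mem_singleton]
    exact ne_of_mem_not_mem (x := a) (by simp [mem_pr]) (by simp [mem_pr, hab, hac])
  · simp only [Finset.mem_insert, Finset.mem_singleton]
    push_neg
    constructor
    · exact ne_of_mem_not_mem (x := b) (by simp [mem_pr]) (by simp [mem_pr, hab.symm, hbc])
    · exact ne_of_mem_not_mem (x := a) (by simp [mem_pr]) (by simp [mem_pr, hab, hac])

lemma triangle_val (hn : 5 ≤ n) {a b c : Fin n} (hab : a ≠ b) (hac : a ≠ c) (hbc : b ≠ c) :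
    ∀ (fuel : ℕ) (turn : Bool), 3 ≤ fuel →
      gameValAux (kneser2 n) fuel turn {pr a b hab, pr a c hac, pr b c hbc} = 6 := by
  intro fuel turn hfuel
  obtain ⟨f, rfl⟩ : ∃ f, fuel = f + 1 := ⟨fuel - 1, by omega⟩
  set T : Finset (KV n) := {pr a b hab, pr a c hac, pr b c hbc} with hT
  have hTcard : T.card = 3 := triangle_card hab hac hbc
  -- every legal move leads to a mixed position
  have hbranch : ∀ v ∈ playable (kneser2 n) T,
      gameValAux (kneser2 n) f (!turn) (insert v T) = 6 := by
    intro v hv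
    rw [mem_playable] at hv
    obtain ⟨hvT, hgp⟩ := hv
    have hnc : NoCherry (↑(insert v T) : Set (KV n)) := gp_to_nc hn hgp
    have hex : ∃ t ∈ T, Disjoint v.1 t.1 := by
      by_contra hcon
      push_neg at hcon
      have hsub : v.1 ⊆ ({a, b, c} : Finset (Fin n)) := by
        intro x hx
        by_contra hxabc
        obtain ⟨y, hyx, hvxy⟩ := other_elt hx
        simp only [Finset.mem_insert, Finset.mem_singleton] at hxabc
        push_neg at hxabc
        have hyin : ∀ t ∈ T, y ∈ t.1 := by
          intro t ht
          have := hcon t ht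
          rw [Finset.not_disjoint_iff] at this
          obtain ⟨z, hzv, hzt⟩ := this
          rw [hvxy, Finset.mem_insert, Finset.mem_singleton] at hzv
          rcases hzv with rfl | rfl
          · exfalso
            rw [hT] at ht
            simp only [Finset.mem_insert, Finset.mem_singleton] at ht
            rcases ht with rfl | rfl | rfl <;>
              (rw [mem_pr] at hzt; tauto)
          · exact hzt
        have h1 := hyin (pr a b hab) (by rw [hT]; simp)
        have h2 := hyin (pr a c hac) (by rw [hT]; simp)
        have h3 := hyin (pr b c hbc) (by rw [hT]; simp)
        rw [mem_pr] at h1 h2 h3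
        rcases h1 with rfl | rfl
        · rcases h3 with h3 | h3 <;> tauto
        · rcases h2 with h2 | h2 <;> tauto
      apply hvT
      rw [hT]
      simp only [Finset.mem_insert, Finset.mem_singleton]
      rcases subset_triple_enum hsub with h | h | h
      · exact Or.inl (Subtype.ext h)
      · exact Or.inr (Or.inl (Subtype.ext h))
      · exact Or.inr (Or.inr (Subtype.ext h))
    obtain ⟨t, htT, hdvt⟩ := hex
    have hmixed : MixedP v t (insert v T) := by
      refine ⟨hnc, Finset.mem_insert_self v T, Finset.mem_insert_of_mem htT,
        pr a b hab, ?_, pr a c hac, ?_, ?_, pr_not_disj⟩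
      · exact Finset.mem_insert_of_mem (by rw [hT]; simp)
      · exact Finset.mem_insert_of_mem (by rw [hT]; simp)
      · exact ne_of_mem_not_mem (x := b) (by simp [mem_pr]) (by simp [mem_pr, hab.symm, hbc])
    have hcard4 : (insert v T).card = 4 := by
      rw [Finset.card_insert_of_notMem hvT, hTcard]
    exact mixed_val hn hdvt f (insert v T) (!turn) hmixed (by omega)
  -- a legal move exists
  obtain ⟨d, hd⟩ := exists_fresh hn {a, b, c} (by
    apply le_trans (Finset.card_insert_le _ _)
    apply Nat.succ_le_succ
    apply le_trans (Finset.card_insert_le _ _)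
    simp)
  simp only [Finset.mem_insert, Finset.mem_singleton] at hd
  push_neg at hd
  obtain ⟨hda, hdb, hdc⟩ := hd
  have hw : pr a d (Ne.symm hda) ∈ playable (kneser2 n) T := by
    rw [mem_playable]
    constructor
    · intro hmem
      rw [hT] at hmem
      simp only [Finset.mem_insert, Finset.mem_singleton] at hmem
      rcases hmem with h | h | h <;>
        exact absurd (h ▸ (mem_pr.mpr (Or.inr rfl))) (by simp [mem_pr, hda, hdb, hdc])
    · apply nc_to_gp hn
      apply nc_of_subset_K4 (A := {a, b, c, d})
      · rw [Finset.card_insert_of_notMem (by simp [hab, hac, hda.symm]),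
          Finset.card_insert_of_notMem (by simp [hbc, hdb.symm]),
          Finset.card_pair (fun h => hdc h.symm)]
      · intro e he
        rw [Finset.mem_coe, Finset.mem_insert] at he
        rcases he with rfl | he
        · intro x hx
          rw [mem_pr] at hx
          rcases hx with rfl | rfl <;> simp
        · rw [hT] at he
          simp only [Finset.mem_insert, Finset.mem_singleton] at he
          rcases he with rfl | rfl | rfl <;>
            (intro x hx; rw [mem_pr] at hx; rcases hx with rfl | rfl <;> simp)
  exact val_succ_const f T turn ⟨_, hw⟩ hbranch

end KneserGame
namespace KneserGame
variable {n : ℕ}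

lemma star3_move (hn : 5 ≤ n) {v a b c : Fin n} (hva : v ≠ a) (hvb : v ≠ b) (hvc : v ≠ c)
    (hab : a ≠ b) (hac : a ≠ c) (hbc : b ≠ c) (f : ℕ) (hf : 2 ≤ f) :
    pr a b hab ∈ playable (kneser2 n) {pr v a hva, pr v b hvb, pr v c hvc} ∧
      ∀ t : Bool, gameValAux (kneser2 n) f t
        (insert (pr a b hab) {pr v a hva, pr v b hvb, pr v c hvc}) = 6 := by
  set S3 : Finset (KV n) := {pr v a hva, pr v b hvb, pr v c hvc} with hS3
  have hsubA : ∀ e ∈ (↑(insert (pr a b hab) S3) : Set (KV n)),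
      e.1 ⊆ ({v, a, b, c} : Finset (Fin n)) := by
    intro e he
    rw [Finset.mem_coe, Finset.mem_insert] at he
    rcases he with rfl | he
    · intro x hx; rw [mem_pr] at hx; rcases hx with rfl | rfl <;> simp
    · rw [hS3] at he
      simp only [Finset.mem_insert, Finset.mem_singleton] at he
      rcases he with rfl | rfl | rfl <;>
        (intro x hx; rw [mem_pr] at hx; rcases hx with rfl | rfl <;> simp)
  have hcardA : ({v, a, b, c} : Finset (Fin n)).card = 4 := by
    rw [Finset.card_insert_of_notMem (by simp [hva, hvb, hvc]),
      Finset.card_insert_of_notMem (by simp [hab, hac]),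
      Finset.card_pair hbc]
  have hnc : NoCherry (↑(insert (pr a b hab) S3) : Set (KV n)) :=
    nc_of_subset_K4 hcardA hsubA
  have hwnotmem : pr a b hab ∉ S3 := by
    intro hmem
    rw [hS3] at hmem
    simp only [Finset.mem_insert, Finset.mem_singleton] at hmem
    rcases hmem with h | h | h
    · exact ne_of_mem_not_mem (x := v) (mem_pr.mpr (Or.inl rfl))
        (by simp [mem_pr, hva, hvb]) h.symm
    · exact ne_of_mem_not_mem (x := v) (mem_pr.mpr (Or.inl rfl))
        (by simp [mem_pr, hva, hvb]) h.symm
    · exact ne_of_mem_not_mem (x := v) (mem_pr.mpr (Or.inl rfl))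
        (by simp [mem_pr, hva, hvb]) h.symm
  have hS3card : S3.card = 3 := by
    rw [hS3, Finset.card_insert_of_notMem, Finset.card_insert_of_notMem,
      Finset.card_singleton]
    · simp only [Finset.mem_singleton]
      exact ne_of_mem_not_mem (x := b) (mem_pr.mpr (Or.inr rfl))
        (by simp [mem_pr, hvb.symm, hbc])
    · simp only [Finset.mem_insert, Finset.mem_singleton]
      push_neg
      exact ⟨ne_of_mem_not_mem (x := a) (mem_pr.mpr (Or.inr rfl))
          (by simp [mem_pr, hva.symm, hab]),
        ne_of_mem_not_mem (x := a) (mem_pr.mpr (Or.inr rfl))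
          (by simp [mem_pr, hva.symm, hac])⟩
  constructor
  · rw [mem_playable]
    exact ⟨hwnotmem, nc_to_gp hn hnc⟩
  · intro t
    have hmx : MixedP (pr a b hab) (pr v c hvc) (insert (pr a b hab) S3) := by
      refine ⟨hnc, Finset.mem_insert_self _ _,
        Finset.mem_insert_of_mem (by rw [hS3]; simp),
        pr v a hva, Finset.mem_insert_of_mem (by rw [hS3]; simp),
        pr v b hvb, Finset.mem_insert_of_mem (by rw [hS3]; simp),
        ?_, pr_not_disj⟩
      exact ne_of_mem_not_mem (x := a) (mem_pr.mpr (Or.inr rfl))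
        (by simp [mem_pr, hva.symm, hab])
    have hdisj : Disjoint (pr a b hab).1 (pr v c hvc).1 :=
      pr_disj hva.symm hac hvb.symm hbc
    have hcard4 : (insert (pr a b hab) S3).card = 4 := by
      rw [Finset.card_insert_of_notMem hwnotmem, hS3card]
    exact mixed_val hn hdisj f _ t hmx (by omega)

lemma star3_true_ge (hn : 5 ≤ n) {v a b c : Fin n} (hva : v ≠ a) (hvb : v ≠ b) (hvc : v ≠ c)
    (hab : a ≠ b) (hac : a ≠ c) (hbc : b ≠ c) :
    ∀ (fuel : ℕ), 3 ≤ fuel →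
      6 ≤ gameValAux (kneser2 n) fuel true {pr v a hva, pr v b hvb, pr v c hvc} := by
  intro fuel hfuel
  obtain ⟨f, rfl⟩ : ∃ f, fuel = f + 1 := ⟨fuel - 1, by omega⟩
  obtain ⟨hw, hval⟩ := star3_move hn hva hvb hvc hab hac hbc f (by omega)
  exact sup_ge_six f _ _ hw (hval false).ge

lemma star3_false_le (hn : 5 ≤ n) {v a b c : Fin n} (hva : v ≠ a) (hvb : v ≠ b) (hvc : v ≠ c)
    (hab : a ≠ b) (hac : a ≠ c) (hbc : b ≠ c) :
    ∀ (fuel : ℕ), 3 ≤ fuel →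
      gameValAux (kneser2 n) fuel false {pr v a hva, pr v b hvb, pr v c hvc} ≤ 6 := by
  intro fuel hfuel
  obtain ⟨f, rfl⟩ : ∃ f, fuel = f + 1 := ⟨fuel - 1, by omega⟩
  obtain ⟨hw, hval⟩ := star3_move hn hva hvb hvc hab hac hbc f (by omega)
  exact inf_le_six f _ _ hw (hval true).le

lemma i2_val (hn : 5 ≤ n) {x y z : Fin n} (hxy : x ≠ y) (hxz : x ≠ z) (hyz : y ≠ z) :
    ∀ (fuel : ℕ) (turn : Bool), 4 ≤ fuel →
      gameValAux (kneser2 n) fuel turn {pr x y hxy, pr x z hxz} = 6 := by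
  intro fuel turn hfuel
  obtain ⟨f, rfl⟩ : ∃ f, fuel = f + 1 := ⟨fuel - 1, by omega⟩
  set I : Finset (KV n) := {pr x y hxy, pr x z hxz} with hI
  have hIcard : I.card = 2 := by
    rw [hI, Finset.card_insert_of_notMem, Finset.card_singleton]
    simp only [Finset.mem_singleton]
    exact ne_of_mem_not_mem (x := y) (mem_pr.mpr (Or.inr rfl))
      (by simp [mem_pr, hxy.symm, hyz])
  -- the triangle completion of I
  have htri_eq : insert (pr y z hyz) I = {pr x y hxy, pr x z hxz, pr y z hyz} := by
    rw [hI]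
    ext e
    simp only [Finset.mem_insert, Finset.mem_singleton]
    tauto
  have htri_val : ∀ t : Bool,
      gameValAux (kneser2 n) f t (insert (pr y z hyz) I) = 6 := by
    intro t
    rw [htri_eq]
    exact triangle_val hn hxy hxz hyz f t (by omega)
  -- the triangle move is legal
  have hw : pr y z hyz ∈ playable (kneser2 n) I := by
    rw [mem_playable]
    constructor
    · intro hmem
      rw [hI] at hmem
      simp only [Finset.mem_insert, Finset.mem_singleton] at hmem
      rcases hmem with h | h <;>
        exact ne_of_mem_not_mem (x := x) (mem_pr.mpr (Or.inl rfl))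
          (by simp [mem_pr, hxy, hxz]) h.symm
    · obtain ⟨d, hd⟩ := exists_fresh hn {x, y, z} (by
        apply le_trans (Finset.card_insert_le _ _)
        apply Nat.succ_le_succ
        apply le_trans (Finset.card_insert_le _ _)
        simp)
      simp only [Finset.mem_insert, Finset.mem_singleton] at hd
      push_neg at hd
      obtain ⟨hdx, hdy, hdz⟩ := hd
      apply nc_to_gp hn
      apply nc_of_subset_K4 (A := {x, y, z, d})
      · rw [Finset.card_insert_of_notMem (by simp [hxy, hxz, hdx.symm]),
          Finset.card_insert_of_notMem (by simp [hyz, hdy.symm]),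
          Finset.card_pair (fun h => hdz h.symm)]
      · intro e he
        rw [Finset.mem_coe, Finset.mem_insert] at he
        rcases he with rfl | he
        · intro w hw; rw [mem_pr] at hw; rcases hw with rfl | rfl <;> simp
        · rw [hI] at he
          simp only [Finset.mem_insert, Finset.mem_singleton] at he
          rcases he with rfl | rfl <;>
            (intro w hw; rw [mem_pr] at hw; rcases hw with rfl | rfl <;> simp)
  -- classification of all legal moves
  have hbranch : ∀ u ∈ playable (kneser2 n) I,
      gameValAux (kneser2 n) f false (insert u I) ≤ 6 ∧
        6 ≤ gameValAux (kneser2 n) f true (insert u I) := by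
    intro u hu
    rw [mem_playable] at hu
    obtain ⟨huI, hgp⟩ := hu
    have hnc : NoCherry (↑(insert u I) : Set (KV n)) := gp_to_nc hn hgp
    by_cases hd1 : Disjoint u.1 (pr x y hxy).1
    · have hmx : MixedP u (pr x y hxy) (insert u I) := by
        refine ⟨hnc, Finset.mem_insert_self _ _,
          Finset.mem_insert_of_mem (by rw [hI]; simp),
          pr x y hxy, Finset.mem_insert_of_mem (by rw [hI]; simp),
          pr x z hxz, Finset.mem_insert_of_mem (by rw [hI]; simp),
          ?_, pr_not_disj⟩
        exact ne_of_mem_not_mem (x := y) (mem_pr.mpr (Or.inr rfl))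
          (by simp [mem_pr, hxy.symm, hyz])
      have hcard3 : (insert u I).card = 3 := by
        rw [Finset.card_insert_of_notMem huI, hIcard]
      have hv := fun t => mixed_val hn hd1 f (insert u I) t hmx (by omega)
      exact ⟨(hv false).le, (hv true).ge⟩
    · by_cases hd2 : Disjoint u.1 (pr x z hxz).1
      · have hmx : MixedP u (pr x z hxz) (insert u I) := by
          refine ⟨hnc, Finset.mem_insert_self _ _,
            Finset.mem_insert_of_mem (by rw [hI]; simp),
            pr x y hxy, Finset.mem_insert_of_mem (by rw [hI]; simp),
            pr x z hxz, Finset.mem_insert_of_mem (by rw [hI]; simp),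
            ?_, pr_not_disj⟩
          exact ne_of_mem_not_mem (x := y) (mem_pr.mpr (Or.inr rfl))
            (by simp [mem_pr, hxy.symm, hyz])
        have hcard3 : (insert u I).card = 3 := by
          rw [Finset.card_insert_of_notMem huI, hIcard]
        have hv := fun t => mixed_val hn hd2 f (insert u I) t hmx (by omega)
        exact ⟨(hv false).le, (hv true).ge⟩
      · -- u meets both edges of I
        by_cases hxu : x ∈ u.1
        · -- u is a star edge pr x d
          obtain ⟨d, hdx, hud⟩ := other_elt hxu
          have hu_eq : u = pr x d (Ne.symm hdx) := Subtype.ext (by rw [pr_val]; exact hud)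
          have hdy : d ≠ y := by
            rintro rfl
            apply huI
            rw [hI, hu_eq]
            simp
          have hdz : d ≠ z := by
            rintro rfl
            apply huI
            rw [hI, hu_eq]
            simp
          have hins : insert u I = {pr x d (Ne.symm hdx), pr x y hxy, pr x z hxz} := by
            rw [hu_eq, hI]
          constructor
          · rw [hins]
            exact star3_false_le hn (Ne.symm hdx) hxy hxz hdy hdz hyz f (by omega)
          · rw [hins]
            exact star3_true_ge hn (Ne.symm hdx) hxy hxz hdy hdz hyz f (by omega)
        · -- u must be the triangle move
          have hyu : y ∈ u.1 := by
            rw [Finset.not_disjoint_iff] at hd1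
            obtain ⟨w, hwu, hwxy⟩ := hd1
            rw [mem_pr] at hwxy
            rcases hwxy with rfl | rfl
            · exact absurd hwu hxu
            · exact hwu
          have hzu : z ∈ u.1 := by
            rw [Finset.not_disjoint_iff] at hd2
            obtain ⟨w, hwu, hwxz⟩ := hd2
            rw [mem_pr] at hwxz
            rcases hwxz with rfl | rfl
            · exact absurd hwu hxu
            · exact hwu
          have hueq : u = pr y z hyz := by
            apply Subtype.ext
            rw [pr_val]
            refine (Finset.eq_of_subset_of_card_le ?_ ?_).symm
            · intro w hw
              simp only [Finset.mem_insert, Finset.mem_singleton] at hw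
              rcases hw with rfl | rfl
              · exact hyu
              · exact hzu
            · rw [u.2, Finset.card_pair hyz]
          rw [hueq]
          exact ⟨(htri_val false).le, (htri_val true).ge⟩
  cases turn with
  | true =>
      exact sup_eq_six f I (fun v hv => (hbranch v hv).1) _ hw (htri_val false)
  | false =>
      exact inf_eq_six f I (fun v hv => (hbranch v hv).2) _ hw (htri_val true)

end KneserGame
namespace KneserGame
variable {n : ℕ}

lemma nc_pair (u v : KV n) : NoCherry ({u, v} : Set (KV n)) := by
  intro a ha b hb c hc hne hnd hca hcb
  have h1 : c ≠ a := ne_of_disjoint hca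
  have h2 : c ≠ b := ne_of_disjoint hcb
  simp only [Set.mem_insert_iff, Set.mem_singleton_iff] at ha hb hc
  rcases ha with rfl | rfl <;> rcases hb with rfl | rfl <;> rcases hc with rfl | rfl <;> tauto

lemma nc_singleton (u : KV n) : NoCherry ({u} : Set (KV n)) := by
  have h : ({u} : Set (KV n)) = {u, u} := by simp
  rw [h]
  exact nc_pair u u

lemma m2_move (hn : 5 ≤ n) {p q : KV n} (hpq : Disjoint p.1 q.1) (f : ℕ) (hf : 3 ≤ f) :
    ∃ w ∈ playable (kneser2 n) {p, q},
      ∀ t : Bool, gameValAux (kneser2 n) f t (insert w {p, q}) = 6 := by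
  obtain ⟨p1, hp1⟩ := nonempty_val p
  obtain ⟨q1, hq1⟩ := nonempty_val q
  have hp1q1 : p1 ≠ q1 := by
    rintro rfl
    exact Finset.disjoint_left.mp hpq hp1 hq1
  set w : KV n := pr p1 q1 hp1q1 with hwdef
  have hA : (p.1 ∪ q.1).card = 4 := card_pq hpq
  have hsubA : ∀ e ∈ (↑(insert w ({p, q} : Finset (KV n))) : Set (KV n)),
      e.1 ⊆ p.1 ∪ q.1 := by
    intro e he
    rw [Finset.mem_coe, Finset.mem_insert] at he
    rcases he with rfl | he
    · intro s hs
      rw [hwdef, mem_pr] at hs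
      rw [Finset.mem_union]
      rcases hs with rfl | rfl
      · exact Or.inl hp1
      · exact Or.inr hq1
    · simp only [Finset.mem_insert, Finset.mem_singleton] at he
      rcases he with rfl | rfl
      · exact fun s hs => Finset.mem_union_left _ hs
      · exact fun s hs => Finset.mem_union_right _ hs
  have hnc : NoCherry (↑(insert w ({p, q} : Finset (KV n))) : Set (KV n)) :=
    nc_of_subset_K4 hA hsubA
  have hwp : w ≠ p := ne_of_mem_not_mem (x := q1) (mem_pr.mpr (Or.inr rfl))
    (fun hc => Finset.disjoint_left.mp hpq hc hq1)
  have hwq : w ≠ q := ne_of_mem_not_mem (x := p1) (mem_pr.mpr (Or.inl rfl))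
    (fun hc => Finset.disjoint_left.mp hpq hp1 hc)
  have hwnot : w ∉ ({p, q} : Finset (KV n)) := by
    simp only [Finset.mem_insert, Finset.mem_singleton]
    push_neg
    exact ⟨hwp, hwq⟩
  refine ⟨w, ?_, ?_⟩
  · rw [mem_playable]
    exact ⟨hwnot, nc_to_gp hn hnc⟩
  · intro t
    have hmx : MixedP p q (insert w ({p, q} : Finset (KV n))) := by
      refine ⟨hnc, Finset.mem_insert_of_mem (by simp), Finset.mem_insert_of_mem (by simp),
        w, Finset.mem_insert_self _ _, p, Finset.mem_insert_of_mem (by simp),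
        hwp, ?_⟩
      rw [Finset.not_disjoint_iff]
      exact ⟨p1, mem_pr.mpr (Or.inl rfl), hp1⟩
    have hpq_card : ({p, q} : Finset (KV n)).card = 2 := by
      rw [Finset.card_insert_of_notMem (by simp [ne_of_disjoint hpq]),
        Finset.card_singleton]
    have hcard3 : (insert w ({p, q} : Finset (KV n))).card = 3 := by
      rw [Finset.card_insert_of_notMem hwnot, hpq_card]
    exact mixed_val hn hpq f _ t hmx (by omega)

lemma m2_true_ge (hn : 5 ≤ n) {p q : KV n} (hpq : Disjoint p.1 q.1) :
    ∀ (fuel : ℕ), 4 ≤ fuel → 6 ≤ gameValAux (kneser2 n) fuel true {p, q} := by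
  intro fuel hfuel
  obtain ⟨f, rfl⟩ : ∃ f, fuel = f + 1 := ⟨fuel - 1, by omega⟩
  obtain ⟨w, hw, hval⟩ := m2_move hn hpq f (by omega)
  exact sup_ge_six f _ _ hw (hval false).ge

lemma m2_false_le (hn : 5 ≤ n) {p q : KV n} (hpq : Disjoint p.1 q.1) :
    ∀ (fuel : ℕ), 4 ≤ fuel → gameValAux (kneser2 n) fuel false {p, q} ≤ 6 := by
  intro fuel hfuel
  obtain ⟨f, rfl⟩ : ∃ f, fuel = f + 1 := ⟨fuel - 1, by omega⟩
  obtain ⟨w, hw, hval⟩ := m2_move hn hpq f (by omega)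
  exact inf_le_six f _ _ hw (hval true).le

lemma e1_val (hn : 5 ≤ n) (e : KV n) :
    ∀ (fuel : ℕ) (turn : Bool), 5 ≤ fuel →
      gameValAux (kneser2 n) fuel turn {e} = 6 := by
  intro fuel turn hfuel
  obtain ⟨f, rfl⟩ : ∃ f, fuel = f + 1 := ⟨fuel - 1, by omega⟩
  obtain ⟨x, y, hxy, hexy⟩ := Finset.card_eq_two.mp e.2
  have he_eq : e = pr x y hxy := Subtype.ext hexy
  obtain ⟨z, hz⟩ := exists_fresh hn {x, y} (by
    apply le_trans (Finset.card_insert_le _ _)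
    simp)
  simp only [Finset.mem_insert, Finset.mem_singleton] at hz
  push_neg at hz
  obtain ⟨hzx, hzy⟩ := hz
  have hxz : x ≠ z := Ne.symm hzx
  have hyz : y ≠ z := Ne.symm hzy
  set w : KV n := pr x z hxz with hwdef
  have hwe : w ≠ e := by
    refine ne_of_mem_not_mem (x := z) (mem_pr.mpr (Or.inr rfl)) ?_
    rw [hexy]
    simp [hzx, hzy]
  have hins_eq : insert w ({e} : Finset (KV n)) = {pr x y hxy, pr x z hxz} := by
    rw [he_eq, hwdef]
    ext u
    simp only [Finset.mem_insert, Finset.mem_singleton]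
    tauto
  have hwval : ∀ t : Bool, gameValAux (kneser2 n) f t (insert w ({e} : Finset (KV n))) = 6 := by
    intro t
    rw [hins_eq]
    exact i2_val hn hxy hxz hyz f t (by omega)
  have hw : w ∈ playable (kneser2 n) {e} := by
    rw [mem_playable]
    refine ⟨by simp [hwe], nc_to_gp hn ?_⟩
    have : (↑(insert w ({e} : Finset (KV n))) : Set (KV n)) = {w, e} := by simp
    rw [this]
    exact nc_pair w e
  have hbranch : ∀ u ∈ playable (kneser2 n) {e},
      gameValAux (kneser2 n) f false (insert u ({e} : Finset (KV n))) ≤ 6 ∧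
        6 ≤ gameValAux (kneser2 n) f true (insert u ({e} : Finset (KV n))) := by
    intro u hu
    rw [mem_playable] at hu
    obtain ⟨hue, _⟩ := hu
    rw [Finset.mem_singleton] at hue
    by_cases hdu : Disjoint u.1 e.1
    · constructor
      · exact m2_false_le hn hdu f (by omega)
      · exact m2_true_ge hn hdu f (by omega)
    · rw [Finset.not_disjoint_iff] at hdu
      obtain ⟨v0, hv0u, hv0e⟩ := hdu
      obtain ⟨a, hav0, hea⟩ := other_elt hv0e
      obtain ⟨b, hbv0, hub⟩ := other_elt hv0u
      have hv0a : v0 ≠ a := Ne.symm hav0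
      have hv0b : v0 ≠ b := Ne.symm hbv0
      have hba : b ≠ a := by
        rintro rfl
        apply hue
        apply Subtype.ext
        rw [hub, hea]
      have hue_eq : e = pr v0 a hv0a := Subtype.ext hea
      have huu_eq : u = pr v0 b hv0b := Subtype.ext hub
      have hins2 : insert u ({e} : Finset (KV n)) = {pr v0 b hv0b, pr v0 a hv0a} := by
        rw [hue_eq, huu_eq]
      have hval2 := fun t => i2_val hn hv0b hv0a hba f t (by omega)
      rw [hins2]
      exact ⟨(hval2 false).le, (hval2 true).ge⟩
  cases turn with
  | true => exact sup_eq_six f {e} (fun v hv => (hbranch v hv).1) _ hw (hwval false)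
  | false => exact inf_eq_six f {e} (fun v hv => (hbranch v hv).2) _ hw (hwval true)

lemma empty_val (hn : 5 ≤ n) :
    ∀ (fuel : ℕ) (turn : Bool), 6 ≤ fuel →
      gameValAux (kneser2 n) fuel turn (∅ : Finset (KV n)) = 6 := by
  intro fuel turn hfuel
  obtain ⟨f, rfl⟩ : ∃ f, fuel = f + 1 := ⟨fuel - 1, by omega⟩
  have h5 : 5 ≤ n := hn
  set a0 : Fin n := ⟨0, by omega⟩ with ha0
  set a1 : Fin n := ⟨1, by omega⟩ with ha1
  have h01 : a0 ≠ a1 := by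
    intro hc
    rw [ha0, ha1, Fin.mk.injEq] at hc
    omega
  set w0 : KV n := pr a0 a1 h01 with hw0
  have hw : w0 ∈ playable (kneser2 n) (∅ : Finset (KV n)) := by
    rw [mem_playable]
    refine ⟨by simp, nc_to_gp hn ?_⟩
    have hcoe : (↑(insert w0 (∅ : Finset (KV n))) : Set (KV n)) = {w0} := by simp
    rw [hcoe]
    exact nc_singleton _
  have hbranch : ∀ u ∈ playable (kneser2 n) (∅ : Finset (KV n)),
      gameValAux (kneser2 n) f (!turn) (insert u ∅) = 6 := by
    intro u _
    have : insert u (∅ : Finset (KV n)) = {u} := rfl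
    rw [this]
    exact e1_val hn u f (!turn) (by omega)
  exact val_succ_const f ∅ turn ⟨w0, hw⟩ hbranch

end KneserGame
namespace KneserGame

lemma gp4_all (S : Set (KV 4)) : IsGPSet (kneser2 4) S := by
  intro u v p hpath hlen
  cases p with
  | nil =>
      apply le_trans (Set.ncard_le_ncard (t := {u}) ?_ (Set.toFinite _))
      · simp
      · intro s hs
        simp only [SimpleGraph.Walk.support_nil, List.mem_singleton, Set.mem_inter_iff,
          Set.mem_setOf_eq] at hs
        simp [hs.2]
  | cons h1 q =>
    rename_i w
    cases q with
    | nil =>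
        apply ncard_le_two_of_subset_pair (a := u) (b := v)
        intro s hs
        simp only [SimpleGraph.Walk.support_cons, SimpleGraph.Walk.support_nil,
          Set.mem_inter_iff, Set.mem_setOf_eq, List.mem_cons, List.mem_singleton] at hs
        rcases hs.2 with rfl | rfl | hc
        · simp
        · simp
        · simp at hc
    | cons h2 r =>
      rename_i x
      exfalso
      have hcompl : ∀ y : KV 4, Disjoint y.1 w.1 → y.1 = Finset.univ \ w.1 := by
        intro y hd
        apply Finset.eq_of_subset_of_card_le
        · intro s hs
          rw [Finset.mem_sdiff]
          exact ⟨Finset.mem_univ _, fun hc => Finset.disjoint_left.mp hd hs hc⟩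
        · rw [Finset.card_sdiff_of_subset (Finset.subset_univ _), Finset.card_univ, Fintype.card_fin,
            w.2, y.2]
      have hux : u = x := by
        apply Subtype.ext
        rw [hcompl u (adj_iff.mp h1), hcompl x (adj_iff.mp h2).symm]
      rw [SimpleGraph.Walk.isPath_def] at hpath
      simp only [SimpleGraph.Walk.support_cons, List.nodup_cons] at hpath
      obtain ⟨hu_notin, _⟩ := hpath
      apply hu_notin
      rw [List.mem_cons]
      right
      rw [hux]
      exact SimpleGraph.Walk.start_mem_support r

lemma val4 : ∀ (fuel : ℕ) (S : Finset (KV 4)) (turn : Bool),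
    Fintype.card (KV 4) ≤ fuel + S.card →
    gameValAux (kneser2 4) fuel turn S = Fintype.card (KV 4) := by
  have h := fill (n := 4) (fun _ => True) Finset.univ
    (fun S _ => Finset.subset_univ S)
    (fun S _ => by
      ext v
      rw [mem_playable, Finset.mem_sdiff]
      constructor
      · rintro ⟨hvS, _⟩
        exact ⟨Finset.mem_univ _, hvS⟩
      · rintro ⟨_, hvS⟩
        exact ⟨hvS, gp4_all _⟩)
    (fun _ _ _ _ => trivial)
  intro fuel S turn hc
  rw [h fuel S turn trivial (by rw [Finset.card_univ]; exact hc), Finset.card_univ]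

end KneserGame

open KneserGame in
/-- For `n ≥ 4`, both game general position numbers of the Kneser graph `K(n,2)` equal 6. -/
theorem stmt_8 (n : ℕ) (hn : 4 ≤ n) :
    gpg (kneser2 n) = 6 ∧ gpg' (kneser2 n) = 6 := by
  have hcard : Fintype.card (KV n) = n.choose 2 := by
    rw [Fintype.card_finset_len, Fintype.card_fin]
  have h6 : 6 ≤ n.choose 2 := by
    calc 6 = Nat.choose 4 2 := by decide
    _ ≤ n.choose 2 := Nat.choose_le_choose 2 hn
  rcases Nat.lt_or_ge n 5 with h5 | h5
  · have hn4 : n = 4 := by omega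
    subst hn4
    have hc6 : Fintype.card (KV 4) = 6 := by rw [hcard]; decide
    constructor
    · show gameValAux (kneser2 4) (Fintype.card (KV 4) - Finset.card (∅ : Finset (KV 4)))
        true ∅ = 6
      rw [val4 _ _ _ (by simp), hc6]
    · show gameValAux (kneser2 4) (Fintype.card (KV 4) - Finset.card (∅ : Finset (KV 4)))
        false ∅ = 6
      rw [val4 _ _ _ (by simp), hc6]
  · have hfuel : 6 ≤ Fintype.card (KV n) - Finset.card (∅ : Finset (KV n)) := by
      rw [Finset.card_empty, Nat.sub_zero, hcard]
      exact h6
    constructor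
    · show gameValAux (kneser2 n) (Fintype.card (KV n) - Finset.card (∅ : Finset (KV n)))
        true ∅ = 6
      exact empty_val h5 _ _ hfuel
    · show gameValAux (kneser2 n) (Fintype.card (KV n) - Finset.card (∅ : Finset (KV n)))
        false ∅ = 6
      exact empty_val h5 _ _ hfuel
end
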